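/- arXiv:2111.10674 — 11 statements merged into one kernel-verified Lean document; each statement's English description precedes it below -/
import Mathlib

section
/- For every α with 0 < α ≤ 1, the following two-player mechanism is α-moral and its allocation function is not monotone (so it is not implementable by any dominant-strategy mechanism): if v₁ ≥ 1, v₁ ≠ 1 + α/10 and v₂ ≥ 1/10, allocate the item to player 1 at price 1; if v₁ = 1 + α/10, allocate the item to player 2 at price 0; otherwise do not allocate the item (all other payments are 0). -/
open scoped NNReal
open Finset

/-- A deterministic direct mechanism for selling a single item to `n` players:
`alloc v = some i` means player `i` gets the item, `alloc v = none` means the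
item is unallocated; `pay v i` is the payment of player `i`. -/
structure Mechanism (n : ℕ) where
  alloc : (Fin n → ℝ≥0) → Option (Fin n)
  pay : (Fin n → ℝ≥0) → Fin n → ℝ

namespace Mechanism

variable {n : ℕ}

/-- The profit of player `i` with true value `t` when the submitted bid vector is `b`:
`π = t·[i wins at b] − pay(b)_i`. -/
def util (M : Mechanism n) (b : Fin n → ℝ≥0) (i : Fin n) (t : ℝ≥0) : ℝ :=
  (if M.alloc b = some i then (t : ℝ) else 0) - M.pay b i

/-- Individual rationality. -/
def IR (M : Mechanism n) : Prop :=
  ∀ v i, M.pay v i ≤ if M.alloc v = some i then ((v i : ℝ)) else 0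

/-- No positive transfers. -/
def NPT (M : Mechanism n) : Prop := ∀ v i, 0 ≤ M.pay v i

/-- `α`-moral mechanism: individually rational, no positive transfers, and whenever a
misreport `r` of player `i` strictly increases his profit (compared to truth-telling),
the gain is at most `α` times the total loss the misreport causes to the other players. -/
def Moral (α : ℝ) (M : Mechanism n) : Prop :=
  M.IR ∧ M.NPT ∧
  ∀ (v : Fin n → ℝ≥0) (i : Fin n) (r : ℝ≥0),
    0 < M.util (Function.update v i r) i (v i) - M.util v i (v i) →
    M.util (Function.update v i r) i (v i) - M.util v i (v i) ≤
      α * ∑ j ∈ Finset.univ.erase i,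
        (M.util v j (v j) - M.util (Function.update v i r) j (v j))

/-- Truth-telling is a dominant strategy. -/
def DominantStrategy (M : Mechanism n) : Prop :=
  ∀ (v : Fin n → ℝ≥0) (i : Fin n) (r : ℝ≥0),
    M.util (Function.update v i r) i (v i) ≤ M.util v i (v i)

end Mechanism

/-- An allocation function is monotone if a winner keeps winning when he raises his bid. -/
def AllocMonotone {n : ℕ} (f : (Fin n → ℝ≥0) → Option (Fin n)) : Prop :=
  ∀ (v : Fin n → ℝ≥0) (i : Fin n) (r : ℝ≥0),
    f v = some i → v i < r → f (Function.update v i r) = some i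

/-- The two-player mechanism of Claim 3.1: if `v₁ ≥ 1`, `v₁ ≠ 1 + α/10` and `v₂ ≥ 1/10`,
allocate to player 1 at price 1; if `v₁ = 1 + α/10`, allocate to player 2 at price 0;
otherwise do not allocate (all other payments are 0). -/
noncomputable def M₀ (α : ℝ) : Mechanism 2 where
  alloc v :=
    if 1 ≤ (v 0 : ℝ) ∧ (v 0 : ℝ) ≠ 1 + α / 10 ∧ (1 : ℝ) / 10 ≤ (v 1 : ℝ) then some 0
    else if (v 0 : ℝ) = 1 + α / 10 then some 1
    else none
  pay v i :=
    if 1 ≤ (v 0 : ℝ) ∧ (v 0 : ℝ) ≠ 1 + α / 10 ∧ (1 : ℝ) / 10 ≤ (v 1 : ℝ) ∧ i = 0 then 1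
    else 0

lemma fin2_cases (i : Fin 2) : i = 0 ∨ i = 1 := by omega

section Aux

variable (α : ℝ) (v : Fin 2 → ℝ≥0)

/-- Condition for player 0 to win. -/
def Acond : Prop :=
  1 ≤ (v 0 : ℝ) ∧ (v 0 : ℝ) ≠ 1 + α / 10 ∧ (1 : ℝ) / 10 ≤ (v 1 : ℝ)

noncomputable instance : Decidable (Acond α v) := by unfold Acond; infer_instance

lemma M0_alloc_pos (h : Acond α v) : (M₀ α).alloc v = some 0 := if_pos h

lemma M0_alloc_B (hB : (v 0 : ℝ) = 1 + α / 10) : (M₀ α).alloc v = some 1 := by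
  have hn : ¬ (1 ≤ (v 0 : ℝ) ∧ (v 0 : ℝ) ≠ 1 + α / 10 ∧ (1 : ℝ) / 10 ≤ (v 1 : ℝ)) :=
    fun h => h.2.1 hB
  show (if _ then _ else _) = _
  rw [if_neg hn, if_pos hB]

lemma M0_alloc_none (hA : ¬ Acond α v) (hB : (v 0 : ℝ) ≠ 1 + α / 10) :
    (M₀ α).alloc v = none := by
  have hn : ¬ (1 ≤ (v 0 : ℝ) ∧ (v 0 : ℝ) ≠ 1 + α / 10 ∧ (1 : ℝ) / 10 ≤ (v 1 : ℝ)) := hA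
  show (if _ then _ else _) = _
  rw [if_neg hn, if_neg hB]

lemma M0_pay0 (h : Acond α v) : (M₀ α).pay v 0 = 1 :=
  if_pos ⟨h.1, h.2.1, h.2.2, rfl⟩

lemma M0_pay0' (h : ¬ Acond α v) : (M₀ α).pay v 0 = 0 :=
  if_neg (fun hc => h ⟨hc.1, hc.2.1, hc.2.2.1⟩)

lemma M0_pay1 : (M₀ α).pay v 1 = 0 :=
  if_neg (fun hc => absurd hc.2.2.2 (by decide))

lemma M0_util0 (t : ℝ≥0) :
    (M₀ α).util v 0 t = if Acond α v then (t : ℝ) - 1 else 0 := by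
  by_cases hA : Acond α v
  · rw [Mechanism.util, M0_alloc_pos α v hA, if_pos rfl, M0_pay0 α v hA, if_pos hA]
  · rw [Mechanism.util, M0_pay0' α v hA, if_neg hA, sub_zero]
    by_cases hB : (v 0 : ℝ) = 1 + α / 10
    · rw [M0_alloc_B α v hB]
      simp
    · rw [M0_alloc_none α v hA hB]
      simp

lemma M0_util1 (t : ℝ≥0) :
    (M₀ α).util v 1 t = if (v 0 : ℝ) = 1 + α / 10 then (t : ℝ) else 0 := by
  by_cases hB : (v 0 : ℝ) = 1 + α / 10
  · rw [Mechanism.util, M0_alloc_B α v hB, if_pos rfl, M0_pay1, if_pos hB, sub_zero]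
  · rw [Mechanism.util, M0_pay1, if_neg hB, sub_zero]
    by_cases hA : Acond α v
    · rw [M0_alloc_pos α v hA]
      simp
    · rw [M0_alloc_none α v hA hB]
      simp

end Aux

theorem stmt0 (α : ℝ) (hα0 : 0 < α) (hα1 : α ≤ 1) :
    (M₀ α).Moral α ∧ ¬ AllocMonotone (M₀ α).alloc ∧
      ¬ ∃ p : (Fin 2 → ℝ≥0) → Fin 2 → ℝ,
          Mechanism.DominantStrategy ⟨(M₀ α).alloc, p⟩ := by
  have hα10 : (0:ℝ) < α / 10 := by positivity
  have h1ne : (1:ℝ) ≠ 1 + α / 10 := by linarith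
  set r₀ : ℝ≥0 := Real.toNNReal (1 + α / 10) with hr₀
  have hr₀c : (r₀ : ℝ) = 1 + α / 10 := Real.coe_toNNReal _ (by linarith)
  set v₀ : Fin 2 → ℝ≥0 := ![1, 1/10] with hv₀
  have hv00 : ((v₀ 0 : ℝ≥0) : ℝ) = 1 := by norm_num [hv₀]
  have hv01 : ((v₀ 1 : ℝ≥0) : ℝ) = 1/10 := by norm_num [hv₀]
  have h01 : (0 : Fin 2) ≠ 1 := by decide
  have h10 : (1 : Fin 2) ≠ 0 := by decide
  have hAv₀ : Acond α v₀ :=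
    ⟨le_of_eq hv00.symm, by rw [hv00]; exact h1ne, le_of_eq hv01.symm⟩
  refine ⟨⟨?_, ?_, ?_⟩, ?_, ?_⟩
  · -- IR
    intro v i
    rcases fin2_cases i with rfl | rfl
    · by_cases hA : Acond α v
      · rw [M0_pay0 α v hA, M0_alloc_pos α v hA, if_pos rfl]
        exact hA.1
      · rw [M0_pay0' α v hA]
        split
        · positivity
        · exact le_refl 0
    · rw [M0_pay1]
      split
      · positivity
      · exact le_refl 0
  · -- NPT
    intro v i
    rcases fin2_cases i with rfl | rfl
    · by_cases hA : Acond α v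
      · rw [M0_pay0 α v hA]; norm_num
      · rw [M0_pay0' α v hA]
    · rw [M0_pay1]
  · -- the moral condition
    intro v i r hpos
    rcases fin2_cases i with rfl | rfl
    · -- player 0 misreports
      set v' : Fin 2 → ℝ≥0 := Function.update v 0 r with hv'
      have hu0 : v' 0 = r := Function.update_self _ _ _
      have hu1 : v' 1 = v 1 := Function.update_of_ne h10 _ _
      rw [M0_util0, M0_util0] at hpos
      by_cases hA' : Acond α v'
      · have hA'' := hA'
        unfold Acond at hA''
        rw [hu0, hu1] at hA''
        by_cases hA : Acond α v
        · rw [if_pos hA', if_pos hA] at hpos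
          simp at hpos
        · have hv0 : (v 0 : ℝ) = 1 + α / 10 := by
            by_contra hne
            rcases le_or_gt 1 ((v 0 : ℝ)) with hge | hlt
            · exact hA ⟨hge, hne, hA''.2.2⟩
            · rw [if_pos hA', if_neg hA] at hpos
              linarith
          have herase : (Finset.univ.erase (0 : Fin 2)) = {1} := by decide
          have hrne : ¬ ((v' 0 : ℝ) = 1 + α / 10) := hA'.2.1
          rw [herase, Finset.sum_singleton, M0_util0, M0_util0, M0_util1, M0_util1,
            if_pos hA', if_neg hA, if_pos hv0, if_neg hrne]
          have hv1 : (1:ℝ)/10 ≤ (v 1 : ℝ) := hA''.2.2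
          rw [hv0]
          nlinarith
      · rw [if_neg hA'] at hpos
        by_cases hA : Acond α v
        · rw [if_pos hA] at hpos
          have := hA.1
          linarith
        · rw [if_neg hA] at hpos
          simp at hpos
    · -- player 1 misreports
      exfalso
      set v' : Fin 2 → ℝ≥0 := Function.update v 1 r with hv'
      have hu0 : v' 0 = v 0 := Function.update_of_ne h01 _ _
      rw [M0_util1, M0_util1, hu0] at hpos
      simp at hpos
  · -- not monotone
    intro hmono
    have halloc : (M₀ α).alloc v₀ = some 0 := M0_alloc_pos α v₀ hAv₀
    have hlt : v₀ 0 < r₀ := by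
      rw [← NNReal.coe_lt_coe, hv00, hr₀c]; linarith
    have h := hmono v₀ 0 r₀ halloc hlt
    have hB : ((Function.update v₀ 0 r₀) 0 : ℝ) = 1 + α / 10 := by
      rw [Function.update_self]; exact hr₀c
    rw [M0_alloc_B α _ hB] at h
    exact h01 (Option.some_injective _ h.symm)
  · -- no dominant-strategy implementation
    rintro ⟨p, hp⟩
    set w : Fin 2 → ℝ≥0 := Function.update v₀ 0 r₀ with hw
    have hw0 : w 0 = r₀ := Function.update_self _ _ _
    have hw1 : w 1 = v₀ 1 := Function.update_of_ne h10 _ _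
    have hav : (M₀ α).alloc v₀ = some 0 := M0_alloc_pos α v₀ hAv₀
    have haw : (M₀ α).alloc w = some 1 := by
      refine M0_alloc_B α w ?_
      rw [hw0]; exact hr₀c
    have hwv : Function.update w 0 1 = v₀ := by
      funext j
      rcases fin2_cases j with rfl | rfl
      · rw [Function.update_self]
        norm_num [hv₀]
      · rw [Function.update_of_ne h10, hw1]
    have h1 := hp v₀ 0 r₀
    have h2 := hp w 0 1
    rw [← hw] at h1
    rw [hwv] at h2
    have ew : ((⟨(M₀ α).alloc, p⟩ : Mechanism 2)).alloc = (M₀ α).alloc := rfl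
    simp only [Mechanism.util, ew] at h1 h2
    rw [hav, haw, if_pos rfl,
      if_neg (fun h => h01 (Option.some_injective _ h).symm)] at h1 h2
    rw [hw0, hr₀c] at h2
    rw [hv00] at h1
    linarith
end

section
/- Every α-moral mechanism is payment independent: for every player i and every v_i, v'_i, v_{-i}, if player i wins the item in both instances (v_i, v_{-i}) and (v'_i, v_{-i}), then p(v_i,v_{-i})_i = p(v'_i,v_{-i})_i. -/
open scoped NNReal
open Finset

theorem stmt1 {n : ℕ} (α : ℝ) (hα0 : 0 ≤ α) (hα1 : α ≤ 1)
    (M : Mechanism n) (hM : M.Moral α) :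
    ∀ (v : Fin n → ℝ≥0) (i : Fin n) (r : ℝ≥0),
      M.alloc v = some i → M.alloc (Function.update v i r) = some i →
      M.pay v i = M.pay (Function.update v i r) i := by
  intro v i r hv hv'
  obtain ⟨hIR, hNPT, hMor⟩ := hM
  -- losers pay zero
  have lose : ∀ (w : Fin n → ℝ≥0) (j : Fin n), M.alloc w ≠ some j → M.pay w j = 0 := by
    intro w j hj
    have h1 := hIR w j
    rw [if_neg hj] at h1
    exact le_antisymm h1 (hNPT w j)
  -- the sums of others' losses vanish in both directions
  have hsum : ∀ (t w w' : Fin n → ℝ≥0), M.alloc w = some i → M.alloc w' = some i →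
      (∑ j ∈ Finset.univ.erase i, (M.util w j (t j) - M.util w' j (t j))) = 0 := by
    intro t w w' hw hw'
    apply Finset.sum_eq_zero
    intro j hj
    have hji : j ≠ i := Finset.ne_of_mem_erase hj
    have h1 : M.alloc w ≠ some j := by rw [hw]; simp [hji.symm]
    have h2 : M.alloc w' ≠ some j := by rw [hw']; simp [hji.symm]
    simp [Mechanism.util, if_neg h1, if_neg h2, lose w j h1, lose w' j h2]
  set v' := Function.update v i r with hv'def
  have hvv : Function.update v' i (v i) = v := by
    rw [hv'def, Function.update_idem, Function.update_eq_self]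
  have key1 : ¬ M.pay v' i < M.pay v i := by
    intro hlt
    have hpos : 0 < M.util v' i (v i) - M.util v i (v i) := by
      simp only [Mechanism.util, if_pos hv, if_pos hv']
      linarith
    have := hMor v i r hpos
    rw [hsum v v v' hv hv'] at this
    simp at this
    linarith
  have key2 : ¬ M.pay v i < M.pay v' i := by
    intro hlt
    have hpos : 0 < M.util (Function.update v' i (v i)) i (v' i) - M.util v' i (v' i) := by
      rw [hvv]
      simp only [Mechanism.util, if_pos hv, if_pos hv']
      linarith
    have := hMor v' i (v i) hpos
    rw [hvv, hsum v' v' v hv' hv] at this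
    simp only [Mechanism.util, if_pos hv, if_pos hv', mul_zero] at this
    linarith
  linarith [lt_or_ge (M.pay v' i) (M.pay v i)]
end

section
/- For any 0 ≤ c ≤ 1, the n-player mechanism that allocates the item to a player with the highest bid, charges him c·v_j where v_j is the second-highest bid, and charges all other players 0, is 1-moral. -/
open scoped NNReal
open Finset

theorem stmt2 {n : ℕ} (c : ℝ) (hc0 : 0 ≤ c) (hc1 : c ≤ 1) (M : Mechanism n)
    (halloc : ∀ v : Fin n → ℝ≥0, ∃ i, M.alloc v = some i ∧ ∀ j, v j ≤ v i)
    (hpayWin : ∀ (v : Fin n → ℝ≥0) (i : Fin n), M.alloc v = some i →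
      M.pay v i = c * (((Finset.univ.erase i).sup v : ℝ≥0) : ℝ))
    (hpayLose : ∀ (v : Fin n → ℝ≥0) (i : Fin n), M.alloc v ≠ some i → M.pay v i = 0) :
    M.Moral 1 := by
  -- key: sup over erase i is at most v i when i is a max
  have supnn : ∀ (v : Fin n → ℝ≥0) (i : Fin n), (0:ℝ) ≤ (((Finset.univ.erase i).sup v : ℝ≥0) : ℝ) :=
    fun v i => NNReal.coe_nonneg _
  have hsup_le : ∀ (v : Fin n → ℝ≥0) (i : Fin n), (∀ j, v j ≤ v i) →
      (((Finset.univ.erase i).sup v : ℝ≥0) : ℝ) ≤ (v i : ℝ) := by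
    intro v i hmax
    exact_mod_cast Finset.sup_le fun j _ => hmax j
  have hpay_le : ∀ (v : Fin n → ℝ≥0) (i : Fin n), (∀ j, v j ≤ v i) →
      c * (((Finset.univ.erase i).sup v : ℝ≥0) : ℝ) ≤ (v i : ℝ) := by
    intro v i hmax
    calc c * (((Finset.univ.erase i).sup v : ℝ≥0) : ℝ)
        ≤ 1 * (((Finset.univ.erase i).sup v : ℝ≥0) : ℝ) :=
          mul_le_mul_of_nonneg_right hc1 (supnn v i)
      _ = _ := one_mul _
      _ ≤ _ := hsup_le v i hmax
  have hIR : M.IR := by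
    intro v i
    by_cases h : M.alloc v = some i
    · rw [if_pos h, hpayWin v i h]
      obtain ⟨k, hk, hkmax⟩ := halloc v
      rw [h] at hk
      injection hk with hk; subst hk
      exact hpay_le v i hkmax
    · rw [if_neg h, hpayLose v i h]
  have hNPT : M.NPT := by
    intro v i
    by_cases h : M.alloc v = some i
    · rw [hpayWin v i h]
      exact mul_nonneg hc0 (supnn v i)
    · rw [hpayLose v i h]
  refine ⟨hIR, hNPT, ?_⟩
  intro v i r hpos
  set w := Function.update v i r with hwdef
  have hwv : ∀ j, j ≠ i → w j = v j := fun j hj => Function.update_of_ne hj _ _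
  have hsupw : ∀ j : Fin n, (Finset.univ.erase j).sup w = (Finset.univ.erase j).sup v ∨ j ≠ i →
      True := fun _ _ => trivial
  have hsupwi : (Finset.univ.erase i).sup w = (Finset.univ.erase i).sup v :=
    Finset.sup_congr rfl (fun j hj => hwv j (Finset.ne_of_mem_erase hj))
  -- util of i at v is nonnegative
  have hutilv : 0 ≤ M.util v i (v i) := by
    unfold Mechanism.util
    by_cases h : M.alloc v = some i
    · rw [if_pos h, hpayWin v i h]
      obtain ⟨k, hk, hkmax⟩ := halloc v
      rw [h] at hk; injection hk with hk; subst hk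
      linarith [hpay_le v i hkmax]
    · rw [if_neg h, hpayLose v i h]; simp
  -- i must win at w
  have hwi : M.alloc w = some i := by
    by_contra h
    have : M.util w i (v i) = 0 := by
      unfold Mechanism.util; rw [if_neg h, hpayLose w i h]; ring
    rw [this] at hpos; linarith
  -- i must not win at v
  have hvi : M.alloc v ≠ some i := by
    intro h
    have h1 : M.util w i (v i) = M.util v i (v i) := by
      unfold Mechanism.util
      rw [if_pos h, if_pos hwi, hpayWin v i h, hpayWin w i hwi, hsupwi]
    rw [h1] at hpos; linarith
  obtain ⟨m, hmv, hmmax⟩ := halloc v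
  have hmi : m ≠ i := fun h => hvi (h ▸ hmv)
  -- everyone j ≠ i loses at w
  have hlosew : ∀ j, j ≠ i → M.util w j (v j) = 0 := by
    intro j hj
    have h : M.alloc w ≠ some j := by rw [hwi]; simp [hj.symm]
    unfold Mechanism.util; rw [if_neg h, hpayLose w j h]; ring
  have hlosev : ∀ j, j ≠ m → M.util v j (v j) = 0 := by
    intro j hj
    have h : M.alloc v ≠ some j := by rw [hmv]; simp [hj.symm]
    unfold Mechanism.util; rw [if_neg h, hpayLose v j h]; ring
  have hsum : ∑ j ∈ Finset.univ.erase i, (M.util v j (v j) - M.util w j (v j))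
      = M.util v m (v m) := by
    rw [Finset.sum_eq_single_of_mem m (Finset.mem_erase.2 ⟨hmi, Finset.mem_univ m⟩)]
    · rw [hlosew m hmi]; ring
    · intro j hjm hj
      rw [hlosew j (Finset.ne_of_mem_erase hjm), hlosev j hj]; ring
  rw [hsum, one_mul]
  -- compute both sides
  have hLHS : M.util w i (v i) - M.util v i (v i)
      = (v i : ℝ) - c * (((Finset.univ.erase i).sup v : ℝ≥0) : ℝ) := by
    unfold Mechanism.util
    rw [if_pos hwi, if_neg hvi, hpayWin w i hwi, hpayLose v i hvi, hsupwi]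
    ring
  have hRHS : M.util v m (v m)
      = (v m : ℝ) - c * (((Finset.univ.erase m).sup v : ℝ≥0) : ℝ) := by
    unfold Mechanism.util
    rw [if_pos hmv, hpayWin v m hmv]
  rw [hLHS, hRHS]
  have h1 : (v i : ℝ) ≤ (v m : ℝ) := by exact_mod_cast hmmax i
  have h2 : (((Finset.univ.erase m).sup v : ℝ≥0) : ℝ) ≤ (((Finset.univ.erase i).sup v : ℝ≥0) : ℝ) := by
    have hvm : v m ≤ (Finset.univ.erase i).sup v :=
      Finset.le_sup (Finset.mem_erase.2 ⟨hmi, Finset.mem_univ m⟩)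
    have : (Finset.univ.erase m).sup v ≤ v m := Finset.sup_le fun j _ => hmmax j
    exact_mod_cast le_trans this hvm
  nlinarith [mul_le_mul_of_nonneg_left h2 hc0]
end

section
/- Let f be an allocation function for a single-item auction. Suppose M=(f,p) is a dominant-strategy mechanism and M'=(f,p') is an α-moral mechanism (for some 0 ≤ α ≤ 1), and both mechanisms are individually rational with no positive transfers. Then p'(v)_i ≤ p(v)_i for every bid vector v and every player i. -/
open scoped NNReal
open Finset

theorem stmt3 {n : ℕ} (α : ℝ) (hα0 : 0 ≤ α) (hα1 : α ≤ 1)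
    (f : (Fin n → ℝ≥0) → Option (Fin n))
    (p p' : (Fin n → ℝ≥0) → Fin n → ℝ)
    (hIR : Mechanism.IR ⟨f, p⟩) (hNPT : Mechanism.NPT ⟨f, p⟩)
    (hDS : Mechanism.DominantStrategy ⟨f, p⟩)
    (hMoral : Mechanism.Moral α ⟨f, p'⟩) :
    ∀ (v : Fin n → ℝ≥0) (i : Fin n), p' v i ≤ p v i := by
  intro v i
  obtain ⟨hIR', hNPT', hM⟩ := hMoral
  by_cases hwin : f v = some i
  · -- i wins at v
    by_contra hlt
    push_neg at hlt
    have hp0 : 0 ≤ p v i := hNPT v i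
    set m : ℝ := (p v i + p' v i) / 2 with hm
    have hm0 : 0 ≤ m := by simp only [hm]; linarith
    have h1 : p v i < m := by simp only [hm]; linarith
    have h2 : m < p' v i := by simp only [hm]; linarith
    set r : ℝ≥0 := m.toNNReal with hr
    have hrr : (r : ℝ) = m := Real.coe_toNNReal _ hm0
    set w := Function.update v i r with hw
    have hupd : Function.update w i (v i) = v := by
      rw [hw, Function.update_idem, Function.update_eq_self]
    -- dominant strategy of M at instance w, deviating to v i
    have hDSw := hDS w i (v i)
    rw [hupd] at hDSw
    have hwi : w i = r := Function.update_self i r v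
    simp only [Mechanism.util, hwi, hwin, if_pos] at hDSw
    -- hDSw : (r:ℝ) - p v i ≤ (if f w = some i then (r:ℝ) else 0) - p w i
    have hfw : f w = some i := by
      by_contra hno
      rw [if_neg hno] at hDSw
      have hnpw := hNPT w i
      simp only [Mechanism.NPT] at hnpw ⊢
      have : (r : ℝ) ≤ p v i := by linarith
      rw [hrr] at this
      linarith
    -- in M', losers pay 0
    have hzero : ∀ j : Fin n, j ≠ i → p' v j = 0 ∧ p' w j = 0 := by
      intro j hj
      have hv1 := hIR' v j
      have hv2 := hNPT' v j
      have hw1 := hIR' w j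
      have hw2 := hNPT' w j
      have hnv : f v ≠ some j := by
        rw [hwin]; intro hcon; exact hj (Option.some.inj hcon).symm
      have hnw : f w ≠ some j := by
        rw [hfw]; intro hcon; exact hj (Option.some.inj hcon).symm
      simp only [Mechanism.IR, Mechanism.NPT] at hv1 hv2 hw1 hw2
      rw [if_neg hnv] at hv1
      rw [if_neg hnw] at hw1
      constructor <;> linarith
    -- morality at (v, i, r)
    have hpw : p' w i ≤ (r : ℝ) := by
      have := hIR' w i
      simp only [Mechanism.IR] at this
      rw [if_pos hfw] at this
      rwa [hwi] at this
    have hgain : 0 < Mechanism.util ⟨f, p'⟩ (Function.update v i r) i (v i)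
        - Mechanism.util ⟨f, p'⟩ v i (v i) := by
      simp only [Mechanism.util, ← hw, hfw, hwin, if_pos]
      rw [hrr] at hpw
      linarith
    have hMor := hM v i r hgain
    have hsum : ∑ j ∈ Finset.univ.erase i,
        (Mechanism.util ⟨f, p'⟩ v j (v j)
          - Mechanism.util ⟨f, p'⟩ (Function.update v i r) j (v j)) = 0 := by
      apply Finset.sum_eq_zero
      intro j hj
      have hji : j ≠ i := (Finset.mem_erase.mp hj).1
      obtain ⟨hz1, hz2⟩ := hzero j hji
      have hnv : f v ≠ some j := by
        rw [hwin]; intro hcon; exact hji (Option.some.inj hcon).symm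
      have hnw : f (Function.update v i r) ≠ some j := by
        rw [← hw, hfw]; intro hcon; exact hji (Option.some.inj hcon).symm
      simp only [Mechanism.util, if_neg hnv, if_neg hnw]
      rw [← hw, hz1, hz2]
      ring
    rw [hsum, mul_zero] at hMor
    linarith
  · -- i loses at v
    have h1 := hIR' v i
    simp only [Mechanism.IR] at h1
    rw [if_neg hwin] at h1
    have h2 := hNPT v i
    linarith
end

section
/- An individually rational single-item mechanism with no positive transfers is α-moral if and only if it is an α-profit maximizer (for every 0 ≤ α ≤ 1). -/
open scoped NNReal
open Finset

/-- The price of a winning player does not depend on his own report. -/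
def Mechanism.PaymentIndependent {n : ℕ} (M : Mechanism n) : Prop :=
  ∀ (v : Fin n → ℝ≥0) (i : Fin n) (r : ℝ≥0),
    M.alloc v = some i → M.alloc (Function.update v i r) = some i →
    M.pay (Function.update v i r) i = M.pay v i

/-- `α`-profit maximizer: an individually rational, payment independent mechanism with no
positive transfers such that the item, whenever allocated, goes to a player with maximal
nonnegative potential profit; the item is allocated whenever some player has positive
potential profit; and the potential profit of any loser is at most `α` times the potential
profit of the winner.  (Here the potential profit of a player `j` is expressed via any
report `r` that makes him win; if no such report exists his potential profit is `-∞` and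
the corresponding conditions hold vacuously.) -/
def Mechanism.ProfitMaximizer {n : ℕ} (α : ℝ) (M : Mechanism n) : Prop :=
  M.IR ∧ M.NPT ∧ M.PaymentIndependent ∧
  (∀ (v : Fin n → ℝ≥0) (i : Fin n), M.alloc v = some i →
      M.pay v i ≤ (v i : ℝ) ∧
      ∀ (j : Fin n) (r : ℝ≥0), M.alloc (Function.update v j r) = some j →
        (v j : ℝ) - M.pay (Function.update v j r) j ≤ (v i : ℝ) - M.pay v i) ∧
  (∀ v : Fin n → ℝ≥0, M.alloc v = none →
      ∀ (i : Fin n) (r : ℝ≥0), M.alloc (Function.update v i r) = some i →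
        (v i : ℝ) - M.pay (Function.update v i r) i ≤ 0) ∧
  (∀ (v : Fin n → ℝ≥0) (i : Fin n), M.alloc v = some i →
      ∀ (j : Fin n) (r : ℝ≥0), j ≠ i → M.alloc (Function.update v j r) = some j →
        (v j : ℝ) - M.pay (Function.update v j r) j ≤ α * ((v i : ℝ) - M.pay v i))


section Helpers

variable {n : ℕ} {M : Mechanism n}

lemma pay_loser (hIR : M.IR) (hNPT : M.NPT) {v : Fin n → ℝ≥0} {i : Fin n}
    (h : M.alloc v ≠ some i) : M.pay v i = 0 :=
  le_antisymm (by simpa [if_neg h] using hIR v i) (hNPT v i)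

lemma util_loser (hIR : M.IR) (hNPT : M.NPT) {v : Fin n → ℝ≥0} {i : Fin n} (t : ℝ≥0)
    (h : M.alloc v ≠ some i) : M.util v i t = 0 := by
  simp [Mechanism.util, if_neg h, pay_loser hIR hNPT h]

lemma util_winner {v : Fin n → ℝ≥0} {i : Fin n} (t : ℝ≥0) (h : M.alloc v = some i) :
    M.util v i t = (t : ℝ) - M.pay v i := by
  simp [Mechanism.util, h]

lemma alloc_ne {v : Fin n → ℝ≥0} {i j : Fin n} (h : M.alloc v = some i) (hij : i ≠ j) :
    M.alloc v ≠ some j :=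
  fun e => hij (Option.some_inj.mp (h.symm.trans e))

end Helpers

theorem stmt4 {n : ℕ} (α : ℝ) (hα0 : 0 ≤ α) (hα1 : α ≤ 1) (M : Mechanism n) :
    M.Moral α ↔ M.ProfitMaximizer α :=  by
  constructor
  · rintro ⟨hIR, hNPT, hM⟩
    -- First, payment independence.
    have hPI : M.PaymentIndependent := by
      intro v i r hv hu
      set u := Function.update v i r with hudef
      have hsum0 : ∑ j ∈ Finset.univ.erase i, (M.util v j (v j) - M.util u j (v j)) = 0 := by
        apply Finset.sum_eq_zero
        intro j hj
        have hji : j ≠ i := Finset.ne_of_mem_erase hj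
        rw [util_loser hIR hNPT _ (alloc_ne hv (Ne.symm hji)),
          util_loser hIR hNPT _ (alloc_ne hu (Ne.symm hji)), sub_self]
      have hsum0' : ∑ j ∈ Finset.univ.erase i, (M.util u j (u j) - M.util v j (u j)) = 0 := by
        apply Finset.sum_eq_zero
        intro j hj
        have hji : j ≠ i := Finset.ne_of_mem_erase hj
        rw [util_loser hIR hNPT _ (alloc_ne hu (Ne.symm hji)),
          util_loser hIR hNPT _ (alloc_ne hv (Ne.symm hji)), sub_self]
      have e1 : M.util u i (v i) = (v i : ℝ) - M.pay u i := util_winner _ hu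
      have e2 : M.util v i (v i) = (v i : ℝ) - M.pay v i := util_winner _ hv
      have e3 : M.util v i (u i) = (u i : ℝ) - M.pay v i := util_winner _ hv
      have e4 : M.util u i (u i) = (u i : ℝ) - M.pay u i := util_winner _ hu
      have hUv : Function.update u i (v i) = v := by
        rw [hudef, Function.update_idem, Function.update_eq_self]
      by_contra hne
      rcases lt_or_gt_of_ne hne with h | h
      · -- M.pay u i < M.pay v i : deviating from v to r is profitable
        have key := hM v i r (by rw [e1, e2]; linarith)
        rw [e1, e2, hsum0, mul_zero] at key
        linarith
      · -- M.pay v i < M.pay u i : from instance u, deviating to v i is profitable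
        have key := hM u i (v i)
        rw [hUv, e3, e4, hsum0', mul_zero] at key
        have key' := key (by linarith)
        linarith
    -- the key comparison: loser's potential profit vs winner's profit
    have hKey : ∀ (v : Fin n → ℝ≥0) (i : Fin n), M.alloc v = some i →
        ∀ (j : Fin n) (r : ℝ≥0), j ≠ i → M.alloc (Function.update v j r) = some j →
        (v j : ℝ) - M.pay (Function.update v j r) j ≤ α * ((v i : ℝ) - M.pay v i) := by
      intro v i hv j r hji hu
      set u := Function.update v j r with hudef
      have hIRi : 0 ≤ (v i : ℝ) - M.pay v i := by
        have := hIR v i; rw [if_pos hv] at this; linarith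
      by_cases hg : 0 < (v j : ℝ) - M.pay u j
      · have hgain : M.util u j (v j) - M.util v j (v j) = (v j : ℝ) - M.pay u j := by
          rw [util_winner _ hu, util_loser hIR hNPT _ (alloc_ne hv (Ne.symm hji))]; ring
        have hsum : ∑ k ∈ Finset.univ.erase j, (M.util v k (v k) - M.util u k (v k))
            = (v i : ℝ) - M.pay v i := by
          rw [Finset.sum_eq_single_of_mem i
            (Finset.mem_erase.mpr ⟨Ne.symm hji, Finset.mem_univ i⟩)]
          · rw [util_winner _ hv, util_loser hIR hNPT _ (alloc_ne hu hji), sub_zero]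
          · intro k hk hki
            have hkj : k ≠ j := Finset.ne_of_mem_erase hk
            rw [util_loser hIR hNPT _ (alloc_ne hv (Ne.symm hki)),
              util_loser hIR hNPT _ (alloc_ne hu (Ne.symm hkj)), sub_self]
        have key := hM v j r (by rw [hgain]; exact hg)
        rw [hgain, hsum] at key
        exact key
      · push_neg at hg
        exact le_trans hg (mul_nonneg hα0 hIRi)
    refine ⟨hIR, hNPT, hPI, ?_, ?_, ?_⟩
    · -- maximal potential profit
      intro v i hv
      refine ⟨by simpa [if_pos hv] using hIR v i, ?_⟩
      intro j r hu
      have hIRi : 0 ≤ (v i : ℝ) - M.pay v i := by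
        have := hIR v i; rw [if_pos hv] at this; linarith
      by_cases hji : j = i
      · subst hji
        rw [hPI v j r hv hu]
      · have := hKey v i hv j r hji hu
        nlinarith
    · -- unallocated case
      intro v hnone i r hu
      by_contra hg
      push_neg at hg
      set u := Function.update v i r with hudef
      have hvna : M.alloc v ≠ some i := by rw [hnone]; simp
      have hgain : M.util u i (v i) - M.util v i (v i) = (v i : ℝ) - M.pay u i := by
        rw [util_winner _ hu, util_loser hIR hNPT _ hvna]; ring
      have hsum : ∑ k ∈ Finset.univ.erase i, (M.util v k (v k) - M.util u k (v k)) = 0 := by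
        apply Finset.sum_eq_zero
        intro k hk
        have hki : k ≠ i := Finset.ne_of_mem_erase hk
        rw [util_loser hIR hNPT _ (by rw [hnone]; simp),
          util_loser hIR hNPT _ (alloc_ne hu (Ne.symm hki)), sub_self]
      have key := hM v i r (by rw [hgain]; exact hg)
      rw [hgain, hsum, mul_zero] at key
      linarith
    · -- alpha-condition
      intro v i hv j r hji hu
      exact hKey v i hv j r hji hu
  · rintro ⟨hIR, hNPT, hPI, hA, hB, hC⟩
    refine ⟨hIR, hNPT, ?_⟩
    intro v i r hg
    set u := Function.update v i r with hudef
    have hvu : ∀ j, j ≠ i → u j = v j := by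
      intro j hj; rw [hudef, Function.update_of_ne hj]
    have hui : M.alloc u = some i := by
      by_contra h
      have h1 : M.util u i (v i) = 0 := util_loser hIR hNPT _ h
      have h2 : 0 ≤ M.util v i (v i) := by
        rcases eq_or_ne (M.alloc v) (some i) with hv | hv
        · rw [util_winner _ hv]
          have := hIR v i; rw [if_pos hv] at this; linarith
        · rw [util_loser hIR hNPT _ hv]
      linarith
    have hvni : M.alloc v ≠ some i := by
      intro hv
      have hp := hPI v i r hv hui
      rw [util_winner (v i) hui, util_winner (v i) hv, hp] at hg
      linarith
    have hgain : M.util u i (v i) - M.util v i (v i) = (v i : ℝ) - M.pay u i := by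
      rw [util_winner _ hui, util_loser hIR hNPT _ hvni]; ring
    rcases hcase : M.alloc v with _ | k
    · exfalso
      have := hB v hcase i r hui
      rw [hgain] at hg
      linarith
    · have hki : k ≠ i := by rintro rfl; exact hvni hcase
      have hC' := hC v k hcase i r (Ne.symm hki) hui
      have hsum : ∑ j ∈ Finset.univ.erase i, (M.util v j (v j) - M.util u j (v j))
          = (v k : ℝ) - M.pay v k := by
        rw [Finset.sum_eq_single_of_mem k
          (Finset.mem_erase.mpr ⟨hki, Finset.mem_univ k⟩)]
        · rw [util_winner _ hcase, util_loser hIR hNPT _ (alloc_ne hui (Ne.symm hki)), sub_zero]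
        · intro j hj hjk
          have hji : j ≠ i := Finset.ne_of_mem_erase hj
          rw [util_loser hIR hNPT _ (alloc_ne hcase (Ne.symm hjk)),
            util_loser hIR hNPT _ (alloc_ne hui (Ne.symm hji)), sub_self]
      rw [hgain, hsum]
      exact hC'
end

section
/- Let f be an allocation function for a single-item auction with two players, and let M₁=(f,p₁) and M₂=(f,p₂) be two 1-moral mechanisms implementing the same allocation function f with different payment functions. Define p_max(v)_i = max{p₁(v)_i, p₂(v)_i} and p_min(v)_i = min{p₁(v)_i, p₂(v)_i}. Then the mechanisms M_max=(f,p_max) and M_min=(f,p_min) are also 1-moral. -/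
open scoped NNReal
open Finset

lemma fin2_succ_ne (i : Fin 2) : i + 1 ≠ i := by fin_cases i <;> decide

lemma sum_erase_fin2 (i : Fin 2) (g : Fin 2 → ℝ) :
    ∑ j ∈ Finset.univ.erase i, g j = g (i + 1) := by
  fin_cases i <;> simp [show Finset.univ.erase (0 : Fin 2) = {1} by decide,
    show Finset.univ.erase (1 : Fin 2) = {0} by decide]

lemma moral_op (f : (Fin 2 → ℝ≥0) → Option (Fin 2))
    (p₁ p₂ : (Fin 2 → ℝ≥0) → Fin 2 → ℝ)
    (h₁ : Mechanism.Moral 1 ⟨f, p₁⟩) (h₂ : Mechanism.Moral 1 ⟨f, p₂⟩)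
    (op : ℝ → ℝ → ℝ)
    (hop0 : op 0 0 = 0)
    (hople : ∀ a b c : ℝ, a ≤ c → b ≤ c → op a b ≤ c)
    (hopge : ∀ a b : ℝ, 0 ≤ a → 0 ≤ b → 0 ≤ op a b)
    (hopmono : ∀ a b c d : ℝ, a ≤ c → b ≤ d → op a b ≤ op c d)
    (hcomb : ∀ a b c d s t : ℝ, (0 < t - a → t - a ≤ s - c) →
      (0 < t - b → t - b ≤ s - d) → 0 < t - op a b → t - op a b ≤ s - op c d) :
    Mechanism.Moral 1 ⟨f, fun v i => op (p₁ v i) (p₂ v i)⟩ := by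
  obtain ⟨ir₁, npt₁, m₁⟩ := h₁
  obtain ⟨ir₂, npt₂, m₂⟩ := h₂
  have z₁ : ∀ v i, f v ≠ some i → p₁ v i = 0 := fun v i h =>
    le_antisymm (by simpa [Mechanism.IR, if_neg h] using ir₁ v i) (npt₁ v i)
  have z₂ : ∀ v i, f v ≠ some i → p₂ v i = 0 := fun v i h =>
    le_antisymm (by simpa [Mechanism.IR, if_neg h] using ir₂ v i) (npt₂ v i)
  refine ⟨fun v i => hople _ _ _ (ir₁ v i) (ir₂ v i),
    fun v i => hopge _ _ (npt₁ v i) (npt₂ v i), ?_⟩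
  intro v i r hpos
  set v' := Function.update v i r with hv'
  set j : Fin 2 := i + 1 with hj
  have hji : j ≠ i := fin2_succ_ne i
  have hij : (some i : Option (Fin 2)) ≠ some j := by
    simp [Ne, eq_comm]; exact fun h => hji h.symm
  rw [sum_erase_fin2]
  have G₁ := m₁ v i r
  have G₂ := m₂ v i r
  rw [sum_erase_fin2] at G₁ G₂
  simp only [Mechanism.util, ← hj, ← hv'] at hpos G₁ G₂ ⊢
  by_cases hv'i : f v' = some i
  · have hv'j : f v' ≠ some j := by rw [hv'i]; exact hij
    by_cases hvi : f v = some i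
    · have hvj : f v ≠ some j := by rw [hvi]; exact hij
      simp only [if_pos hvi, if_pos hv'i, if_neg hvj, if_neg hv'j, z₁ v j hvj,
        z₂ v j hvj, z₁ v' j hv'j, z₂ v' j hv'j] at hpos G₁ G₂ ⊢
      have k₁ : p₁ v i ≤ p₁ v' i := by
        by_contra h; push_neg at h; nlinarith [G₁ (by linarith)]
      have k₂ : p₂ v i ≤ p₂ v' i := by
        by_contra h; push_neg at h; nlinarith [G₂ (by linarith)]
      have := hopmono _ _ _ _ k₁ k₂
      linarith
    · simp only [if_pos hv'i, if_neg hvi, z₁ v i hvi, z₂ v i hvi, if_neg hv'j,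
        z₁ v' j hv'j, z₂ v' j hv'j, hop0] at hpos G₁ G₂ ⊢
      have key := hcomb (p₁ v' i) (p₂ v' i) (p₁ v j) (p₂ v j)
        ((if f v = some j then (v j : ℝ) else 0)) (v i)
        (fun h => by have := G₁ (by linarith); linarith)
        (fun h => by have := G₂ (by linarith); linarith)
      have := key (by linarith)
      linarith
  · exfalso
    simp only [if_neg hv'i, z₁ v' i hv'i, z₂ v' i hv'i, hop0] at hpos
    by_cases hvi : f v = some i
    · rw [if_pos hvi] at hpos
      have := hople _ _ _ (by simpa [Mechanism.IR, if_pos hvi] using ir₁ v i)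
        (by simpa [Mechanism.IR, if_pos hvi] using ir₂ v i)
      linarith
    · simp only [if_neg hvi, z₁ v i hvi, z₂ v i hvi, hop0] at hpos
      linarith

theorem stmt5 (f : (Fin 2 → ℝ≥0) → Option (Fin 2))
    (p₁ p₂ : (Fin 2 → ℝ≥0) → Fin 2 → ℝ)
    (h₁ : Mechanism.Moral 1 ⟨f, p₁⟩) (h₂ : Mechanism.Moral 1 ⟨f, p₂⟩) :
    Mechanism.Moral 1 ⟨f, fun v i => max (p₁ v i) (p₂ v i)⟩ ∧
    Mechanism.Moral 1 ⟨f, fun v i => min (p₁ v i) (p₂ v i)⟩ := by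
  constructor
  · refine moral_op f p₁ p₂ h₁ h₂ max (by simp) (fun a b c ha hb => max_le ha hb)
      (fun a b ha hb => le_max_of_le_left ha) (fun a b c d h h' => max_le_max h h') ?_
    intro a b c d s t h1 h2 h
    have ha := h1 (lt_of_lt_of_le h (by linarith [le_max_left a b]))
    have hb := h2 (lt_of_lt_of_le h (by linarith [le_max_right a b]))
    rcases max_choice c d with hc | hc <;> rw [hc] <;>
      linarith [le_max_left a b, le_max_right a b]
  · refine moral_op f p₁ p₂ h₁ h₂ min (by simp)
      (fun a b c ha hb => le_trans (min_le_left a b) ha)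
      (fun a b ha hb => le_min ha hb) (fun a b c d h h' => min_le_min h h') ?_
    intro a b c d s t h1 h2 h
    rcases min_choice a b with hm | hm <;> rw [hm] at h ⊢
    · have := h1 h; linarith [min_le_left c d]
    · have := h2 h; linarith [min_le_right c d]
end

section
/- Let M=(f,p) be an α-moral mechanism for some α < 1. Let v_{-i,-j} be a vector specifying the values of all players except i and j. Then for every v_i, v'_i, v_j, v'_j, it cannot be that all four of the following equalities simultaneously hold: f(v_i,v_j,v_{-i,-j}) = i, f(v'_i,v'_j,v_{-i,-j}) = i, f(v'_i,v_j,v_{-i,-j}) = j, and f(v_i,v'_j,v_{-i,-j}) = j. -/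
open scoped NNReal
open Finset

/-- A player who does not get the item pays zero (from IR and NPT). -/
lemma loser_pay_zero {n : ℕ} {M : Mechanism n} (hIR : M.IR) (hNPT : M.NPT)
    {w : Fin n → ℝ≥0} {k : Fin n} (h : M.alloc w ≠ some k) : M.pay w k = 0 := by
  have h1 := hIR w k
  rw [if_neg h] at h1
  exact le_antisymm h1 (hNPT w k)

/-- Key consequence of α-morality: if `j` wins at `w` and `i` wins after `i`
misreports `r`, then `i`'s resulting profit (with true value `w i`) is at most
`α` times `j`'s lost profit. -/
lemma key_ineq {n : ℕ} {α : ℝ} (hα0 : 0 ≤ α) {M : Mechanism n} (hM : M.Moral α)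
    (w : Fin n → ℝ≥0) (i j : Fin n) (hij : i ≠ j) (r : ℝ≥0)
    (hw : M.alloc w = some j) (hw' : M.alloc (Function.update w i r) = some i) :
    (w i : ℝ) - M.pay (Function.update w i r) i ≤ α * ((w j : ℝ) - M.pay w j) := by
  obtain ⟨hIR, hNPT, hmoral⟩ := hM
  have hji : (some j : Option (Fin n)) ≠ some i := fun h => hij (Option.some_injective _ h).symm
  have hijo : (some i : Option (Fin n)) ≠ some j := fun h => hij (Option.some_injective _ h)
  have hpwi : M.pay w i = 0 := loser_pay_zero hIR hNPT (by rw [hw]; exact hji)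
  have hpw'j : M.pay (Function.update w i r) j = 0 :=
    loser_pay_zero hIR hNPT (by rw [hw']; exact hijo)
  have hsCj : M.pay w j ≤ (w j : ℝ) := by
    have h1 := hIR w j
    rwa [if_pos hw] at h1
  have e1 : M.util (Function.update w i r) i (w i) - M.util w i (w i)
      = (w i : ℝ) - M.pay (Function.update w i r) i := by
    rw [Mechanism.util, Mechanism.util, hw, hw', if_pos rfl, if_neg hji, hpwi]; ring
  by_cases hpos : 0 < (w i : ℝ) - M.pay (Function.update w i r) i
  · have hm := hmoral w i r (by rw [e1]; exact hpos)
    rw [e1] at hm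
    have hsum : ∑ k ∈ Finset.univ.erase i,
        (M.util w k (w k) - M.util (Function.update w i r) k (w k))
        = (w j : ℝ) - M.pay w j := by
      rw [Finset.sum_eq_single_of_mem j (Finset.mem_erase.mpr ⟨hij.symm, Finset.mem_univ j⟩)]
      · rw [Mechanism.util, Mechanism.util, hw, hw', if_pos rfl, if_neg hijo, hpw'j]; ring
      · intro k hk hkj
        have hki : k ≠ i := (Finset.mem_erase.mp hk).1
        have h1 : M.pay w k = 0 := loser_pay_zero hIR hNPT
          (by rw [hw]; exact fun h => hkj (Option.some_injective _ h).symm)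
        have h2 : M.pay (Function.update w i r) k = 0 := loser_pay_zero hIR hNPT
          (by rw [hw']; exact fun h => hki (Option.some_injective _ h).symm)
        rw [Mechanism.util, Mechanism.util, hw, hw',
          if_neg (fun h => hkj (Option.some_injective _ h).symm),
          if_neg (fun h => hki (Option.some_injective _ h).symm), h1, h2]
        ring
    rw [hsum] at hm
    exact hm
  · push_neg at hpos
    calc (w i : ℝ) - M.pay (Function.update w i r) i ≤ 0 := hpos
      _ ≤ α * ((w j : ℝ) - M.pay w j) := mul_nonneg hα0 (by linarith)

theorem stmt7 {n : ℕ} (α : ℝ) (hα0 : 0 ≤ α) (hα1 : α < 1)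
    (M : Mechanism n) (hM : M.Moral α)
    (v : Fin n → ℝ≥0) (i j : Fin n) (hij : i ≠ j)
    (vi vi' vj vj' : ℝ≥0) :
    ¬ (M.alloc (Function.update (Function.update v i vi) j vj) = some i ∧
       M.alloc (Function.update (Function.update v i vi') j vj') = some i ∧
       M.alloc (Function.update (Function.update v i vi') j vj) = some j ∧
       M.alloc (Function.update (Function.update v i vi) j vj') = some j) := by
  rintro ⟨hA, hB, hC, hD⟩
  obtain ⟨hIR, hNPT, hmoral⟩ := hM
  set A := Function.update (Function.update v i vi) j vj with hAdef
  set B := Function.update (Function.update v i vi') j vj' with hBdef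
  set C := Function.update (Function.update v i vi') j vj with hCdef
  set D := Function.update (Function.update v i vi) j vj' with hDdef
  -- values at the relevant coordinates
  have hAi : A i = vi := by rw [hAdef, Function.update_of_ne hij, Function.update_self]
  have hAj : A j = vj := by rw [hAdef, Function.update_self]
  have hBi : B i = vi' := by rw [hBdef, Function.update_of_ne hij, Function.update_self]
  have hBj : B j = vj' := by rw [hBdef, Function.update_self]
  have hCi : C i = vi' := by rw [hCdef, Function.update_of_ne hij, Function.update_self]
  have hCj : C j = vj := by rw [hCdef, Function.update_self]
  have hDi : D i = vi := by rw [hDdef, Function.update_of_ne hij, Function.update_self]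
  have hDj : D j = vj' := by rw [hDdef, Function.update_self]
  -- update identities between profiles
  have hCA : Function.update C i vi = A := by
    rw [hCdef, hAdef, Function.update_comm hij.symm, Function.update_idem]
  have hDB : Function.update D i vi' = B := by
    rw [hDdef, hBdef, Function.update_comm hij.symm, Function.update_idem]
  have hAD : Function.update A j vj' = D := by
    rw [hAdef, hDdef, Function.update_idem]
  have hBC : Function.update B j vj = C := by
    rw [hBdef, hCdef, Function.update_idem]
  -- four applications of the key inequality
  have k1 := key_ineq hα0 ⟨hIR, hNPT, hmoral⟩ C i j hij vi hC (by rw [hCA]; exact hA)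
  have k2 := key_ineq hα0 ⟨hIR, hNPT, hmoral⟩ D i j hij vi' hD (by rw [hDB]; exact hB)
  have k3 := key_ineq hα0 ⟨hIR, hNPT, hmoral⟩ A j i hij.symm vj' hA (by rw [hAD]; exact hD)
  have k4 := key_ineq hα0 ⟨hIR, hNPT, hmoral⟩ B j i hij.symm vj hB (by rw [hBC]; exact hC)
  rw [hCi, hCj, hCA] at k1
  rw [hDi, hDj, hDB] at k2
  rw [hAj, hAi, hAD] at k3
  rw [hBj, hBi, hBC] at k4
  -- k1 : (vi' : ℝ) - pay A i ≤ α * ((vj : ℝ) - pay C j)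
  -- k2 : (vi : ℝ) - pay B i ≤ α * ((vj' : ℝ) - pay D j)
  -- k3 : (vj : ℝ) - pay D j ≤ α * ((vi : ℝ) - pay A i)
  -- k4 : (vj' : ℝ) - pay C j ≤ α * ((vi' : ℝ) - pay B i)
  have sA : M.pay A i ≤ (vi : ℝ) := by have h1 := hIR A i; rwa [if_pos hA, hAi] at h1
  have sB : M.pay B i ≤ (vi' : ℝ) := by have h1 := hIR B i; rwa [if_pos hB, hBi] at h1
  have sC : M.pay C j ≤ (vj : ℝ) := by have h1 := hIR C j; rwa [if_pos hC, hCj] at h1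
  have sD : M.pay D j ≤ (vj' : ℝ) := by have h1 := hIR D j; rwa [if_pos hD, hDj] at h1
  set a := M.pay A i
  set b := M.pay B i
  set c := M.pay C j
  set d := M.pay D j
  have hT : ((vi:ℝ) - a) + ((vi':ℝ) - b) + ((vj:ℝ) - c) + ((vj':ℝ) - d)
      ≤ α * (((vi:ℝ) - a) + ((vi':ℝ) - b) + ((vj:ℝ) - c) + ((vj':ℝ) - d)) := by
    nlinarith [k1, k2, k3, k4]
  have hT0 : (0:ℝ) ≤ ((vi:ℝ) - a) + ((vi':ℝ) - b) + ((vj:ℝ) - c) + ((vj':ℝ) - d) := by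
    linarith
  have hTz : ((vi:ℝ) - a) + ((vi':ℝ) - b) + ((vj:ℝ) - c) + ((vj':ℝ) - d) ≤ 0 := by
    nlinarith [hT, hT0]
  have za : (vi:ℝ) - a = 0 := by linarith
  have zb : (vi':ℝ) - b = 0 := by linarith
  have zc : (vj:ℝ) - c = 0 := by linarith
  have zd : (vj':ℝ) - d = 0 := by linarith
  rw [zc, mul_zero] at k1
  rw [zd, mul_zero] at k2
  rw [za, mul_zero] at k3
  rw [zb, mul_zero] at k4
  have hvi : vi = vi' := by
    have : (vi:ℝ) = (vi':ℝ) := by linarith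
    exact_mod_cast this
  have hvj : vj = vj' := by
    have : (vj:ℝ) = (vj':ℝ) := by linarith
    exact_mod_cast this
  subst hvi; subst hvj
  have hAC : A = C := by rw [hAdef, hCdef]
  rw [hAC] at hA
  exact hij (Option.some_injective _ (hA.symm.trans hC))
end

section
/- Every discrete distribution F on V = {0, ε, 2ε, …, 1−ε, 1} whose PDF f satisfies f(v) ≥ f(v')/(1+f(v')) for all v ≥ v' in V is standard. In particular, the uniform distribution on V is standard. -/
open Finset

/-- CDF at the `k`-th grid point (value `k·ε`) of the pdf `g` on indices `0,…,m`. -/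
def cdfAt (g : ℕ → ℝ) (k : ℕ) : ℝ := ∑ j ∈ Finset.range (k + 1), g j

/-- A discrete distribution with pdf `g` on the grid `{0, ε, 2ε, …, mε}` is standard if
for every `v = kε > v' = k'ε` in the grid,
`v − ε(1−F(v))/f(v) ≥ v' − ε(1−F(v))/f(v')`. -/
def IsStandard (m : ℕ) (ε : ℝ) (g : ℕ → ℝ) : Prop :=
  ∀ k k' : ℕ, k ≤ m → k' < k →
    (k' : ℝ) * ε - ε * (1 - cdfAt g k) / g k' ≤
      (k : ℝ) * ε - ε * (1 - cdfAt g k) / g k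

lemma standard_aux (m : ℕ) (ε : ℝ) (hε : 0 < ε) (g : ℕ → ℝ)
    (hpos : ∀ k ≤ m, 0 < g k)
    (hsum : ∑ k ∈ Finset.range (m + 1), g k = 1)
    (hrec : ∀ k k' : ℕ, k' ≤ k → k ≤ m → 1 / g k - 1 / g k' ≤ 1) :
    IsStandard m ε g := by
  intro k k' hk hk'
  set S : ℝ := 1 - cdfAt g k with hS
  have hk'm : k' ≤ m := le_trans hk'.le hk
  have ha : 0 < g k := hpos k hk
  have hb : 0 < g k' := hpos k' hk'm
  have hcdf_le : cdfAt g k ≤ 1 := by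
    rw [← hsum]
    apply Finset.sum_le_sum_of_subset_of_nonneg
    · exact Finset.range_subset_range.2 (by omega)
    · intro j hj _
      exact (hpos j (by simpa using Nat.lt_succ_iff.mp (Finset.mem_range.mp hj))).le
  have hcdf_nonneg : 0 ≤ cdfAt g k := by
    apply Finset.sum_nonneg
    intro j hj
    exact (hpos j (by have := Finset.mem_range.mp hj; omega)).le
  have hS0 : 0 ≤ S := by simp [hS]; linarith
  have hS1 : S ≤ 1 := by simp [hS]; linarith
  have hd : 1 / g k - 1 / g k' ≤ 1 := hrec k k' hk'.le hk
  have key : S * (1 / g k - 1 / g k') ≤ 1 := by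
    calc S * (1 / g k - 1 / g k') ≤ S * 1 := mul_le_mul_of_nonneg_left hd hS0
    _ = S := mul_one S
    _ ≤ 1 := hS1
  have hkk : (1 : ℝ) ≤ (k : ℝ) - (k' : ℝ) := by
    have : (k' : ℝ) + 1 ≤ (k : ℝ) := by exact_mod_cast Nat.succ_le_of_lt hk'
    linarith
  have h2 : ε * (S * (1 / g k - 1 / g k')) ≤ ε * ((k : ℝ) - (k' : ℝ)) := by
    apply mul_le_mul_of_nonneg_left _ hε.le
    linarith
  have heq : ε * S / g k - ε * S / g k' = ε * (S * (1 / g k - 1 / g k')) := by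
    field_simp
  linarith [heq ▸ h2]

theorem stmt8 (m : ℕ) (hm : 0 < m) (ε : ℝ) (hε : ε = 1 / m)
    (g : ℕ → ℝ) (hg : ∀ k ≤ m, 0 < g k ∧ g k ≤ 1)
    (hsum : ∑ k ∈ Finset.range (m + 1), g k = 1)
    (hcond : ∀ k k' : ℕ, k' ≤ k → k ≤ m → g k' / (1 + g k') ≤ g k) :
    IsStandard m ε g ∧ IsStandard m ε (fun _ => 1 / (m + 1)) := by
  have hεpos : 0 < ε := by
    rw [hε]
    positivity
  constructor
  · apply standard_aux m ε hεpos g (fun k hk => (hg k hk).1) hsum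
    intro k k' hkk' hkm
    have ha : 0 < g k := (hg k hkm).1
    have hb : 0 < g k' := (hg k' (le_trans hkk' hkm)).1
    have h := hcond k k' hkk' hkm
    have hfrac : 0 < g k' / (1 + g k') := by positivity
    have h1 : 1 / g k ≤ 1 / (g k' / (1 + g k')) := one_div_le_one_div_of_le hfrac h
    have h2 : 1 / (g k' / (1 + g k')) = 1 / g k' + 1 := by
      field_simp
    linarith
  · apply standard_aux m ε hεpos _ (fun k _ => by positivity)
    · simp [Finset.sum_const, Finset.card_range]
      field_simp
    · intro k k' _ _
      simp
end

section
/- The discrete exponential distribution on V = {0, ε, 2ε, …, 1−ε, 1}, defined by the CDF F(x) = 1 − e^{−x/ε} for x ∈ V with x < 1 and F(1) = 1 (so that f(x) = F(x) − F(x−ε) = (e−1)·e^{−x/ε} for ε ≤ x < 1), is standard. -/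
open Finset

/-- The CDF of the discrete exponential distribution on the grid `{0, ε, …, mε = 1}`
(at index `k`, i.e. at value `x = kε`, so that `x/ε = k`):
`F(x) = 1 − e^{−x/ε}` for `x < 1` and `F(1) = 1`. -/
noncomputable def expCdf (m : ℕ) (k : ℕ) : ℝ :=
  if k < m then 1 - Real.exp (-(k : ℝ)) else 1

/-- The pdf of the discrete exponential distribution: `f(x) = F(x) − F(x−ε)`. -/
noncomputable def expPdf (m : ℕ) (k : ℕ) : ℝ :=
  expCdf m k - (if k = 0 then 0 else expCdf m (k - 1))

/-- The discrete exponential distribution is standard (restricted to grid points with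
positive pdf). -/
theorem stmt9 (m : ℕ) (hm : 0 < m) (ε : ℝ) (hε : ε = 1 / m) :
    ∀ k k' : ℕ, k ≤ m → k' < k → 0 < expPdf m k → 0 < expPdf m k' →
      (k' : ℝ) * ε - ε * (1 - expCdf m k) / expPdf m k' ≤
        (k : ℝ) * ε - ε * (1 - expCdf m k) / expPdf m k := by
  intro k k' hk hlt hfk hfk'
  have hεpos : 0 < ε := by rw [hε]; positivity
  have hk'1 : 1 ≤ k' := by
    by_contra h
    push_neg at h
    interval_cases k'
    simp [expPdf, expCdf, hm] at hfk'
  have hk'm : k' < m := lt_of_lt_of_le hlt hk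
  have he : (2 : ℝ) < Real.exp 1 := by
    have := Real.exp_one_gt_d9; linarith
  have hpdf : ∀ j : ℕ, 1 ≤ j → j < m →
      expPdf m j = Real.exp (-(j : ℝ)) * (Real.exp 1 - 1) := by
    intro j h1 h2
    have hj0 : j ≠ 0 := by omega
    have hj1 : j - 1 < m := by omega
    simp only [expPdf, expCdf, if_neg hj0, if_pos h2, if_pos hj1]
    have hc : ((j - 1 : ℕ) : ℝ) = (j : ℝ) - 1 := by
      push_cast [h1]; ring
    rw [hc, show -((j : ℝ) - 1) = -(j : ℝ) + 1 by ring, Real.exp_add]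
    ring
  have hpk' := hpdf k' hk'1 hk'm
  rcases lt_or_eq_of_le hk with hkm | hkm
  · -- k < m
    have hpk := hpdf k (by omega) hkm
    have hS : 1 - expCdf m k = Real.exp (-(k : ℝ)) := by
      simp [expCdf, if_pos hkm]
    rw [hpk, hpk', hS]
    set a := Real.exp (-(k : ℝ)) with ha
    set b := Real.exp (-(k' : ℝ)) with hb
    have hapos : 0 < a := Real.exp_pos _
    have hbpos : 0 < b := Real.exp_pos _
    have h1 : ε * a / (a * (Real.exp 1 - 1)) = ε * (1 / (Real.exp 1 - 1)) := by
      have hne1 : Real.exp 1 - 1 ≠ 0 := by nlinarith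
      field_simp
    rw [h1, mul_div_assoc]
    have hd : (1 : ℝ) ≤ (k : ℝ) - (k' : ℝ) := by
      have : ((k' + 1 : ℕ) : ℝ) ≤ (k : ℝ) := Nat.cast_le.mpr hlt
      push_cast at this; linarith
    have hX : 1 / (Real.exp 1 - 1) - ((k : ℝ) - (k' : ℝ)) ≤ a / (b * (Real.exp 1 - 1)) := by
      have h2 : 1 / (Real.exp 1 - 1) ≤ 1 := by
        rw [div_le_one (by linarith)]; linarith
      have h3 : 0 < a / (b * (Real.exp 1 - 1)) :=
        div_pos hapos (by nlinarith)
      linarith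
    nlinarith [mul_le_mul_of_nonneg_left hX hεpos.le]
  · -- k = m
    have hS : 1 - expCdf m k = 0 := by
      simp [expCdf, hkm]
    rw [hS]
    have hc : (k' : ℝ) ≤ (k : ℝ) := Nat.cast_le.mpr hlt.le
    have : ε * 0 = 0 := mul_zero ε
    rw [this]
    simp only [zero_div]
    nlinarith
end

section
/- Fix a finitely-supported joint distribution H over the values of n players and an α-moral mechanism M with 0 ≤ α ≤ 1. Then there exists a truthful (dominant-strategy, individually rational, no-positive-transfers) mechanism M' whose expected revenue over H is at least half of the expected revenue of M over H. -/
/-!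
In a moral mechanism a winner's payment cannot depend on his own bid: if `i` wins at two bids
paying different amounts, the cheaper report is a profitable deviation that costs the other
players nothing, since losers have zero profit. So `M` charges each winner a price that depends
only on the others' bids. If the winner `j` of `M` is a highest bidder, the truthful mechanism
that offers every player who can win in `M` the price `max (highest other bid, M's price)` earns
at least `M`'s payment. Otherwise the Vickrey auction earns at least `v j`, which exceeds that
payment by individual rationality. Pointwise, then, the revenue of `M` is at most the sum of
the revenues of these two truthful mechanisms, and one of them earns at least half in
expectation.
-/

open scoped NNReal
open Finset

open Function

variable {n : ℕ}

def maxOther (i : Fin n) (v : Fin n → ℝ≥0) : ℝ≥0 := (univ.erase i).sup v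

theorem maxOther_update (i : Fin n) (v : Fin n → ℝ≥0) (r : ℝ≥0) :
    maxOther i (update v i r) = maxOther i v :=
  sup_congr rfl fun _ hj => update_of_ne (ne_of_mem_erase hj) _ _

theorem le_maxOther {i j : Fin n} (hji : j ≠ i) (v : Fin n → ℝ≥0) : v j ≤ maxOther i v :=
  le_sup (mem_erase.2 ⟨hji, mem_univ j⟩)

theorem maxOther_le_of_isMax {i : Fin n} {v : Fin n → ℝ≥0} (hi : ∀ j, v j ≤ v i) :
    maxOther i v ≤ v i :=
  Finset.sup_le fun j _ => hi j

namespace Mechanism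

variable {M : Mechanism n} {v : Fin n → ℝ≥0} {i j : Fin n}

theorem IR.pay_le_of_alloc_eq_some (hIR : M.IR) (h : M.alloc v = some i) :
    M.pay v i ≤ v i := by
  simpa [h] using hIR v i

theorem IR.util_nonneg (hIR : M.IR) (v : Fin n → ℝ≥0) (i : Fin n) : 0 ≤ M.util v i (v i) :=
  sub_nonneg.2 (hIR v i)

theorem NPT.sum_pay_nonneg (hN : M.NPT) (v : Fin n → ℝ≥0) : 0 ≤ ∑ i, M.pay v i :=
  sum_nonneg fun i _ => hN v i

theorem pay_eq_zero_of_alloc_ne (hIR : M.IR) (hN : M.NPT) (h : M.alloc v ≠ some i) :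
    M.pay v i = 0 :=
  le_antisymm (by simpa [h] using hIR v i) (hN v i)

theorem util_eq_zero_of_alloc_ne (hIR : M.IR) (hN : M.NPT) (h : M.alloc v ≠ some i)
    (t : ℝ≥0) : M.util v i t = 0 := by
  simp [util, h, pay_eq_zero_of_alloc_ne hIR hN h]

theorem sum_pay_eq_of_alloc_eq_some (hIR : M.IR) (hN : M.NPT) (h : M.alloc v = some j) :
    ∑ i, M.pay v i = M.pay v j :=
  sum_eq_single_of_mem j (mem_univ j) fun i _ hij =>
    pay_eq_zero_of_alloc_ne hIR hN (by simp [h, Ne.symm hij])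

theorem sum_pay_eq_zero_of_alloc_eq_none (hIR : M.IR) (hN : M.NPT) (h : M.alloc v = none) :
    ∑ i, M.pay v i = 0 :=
  sum_eq_zero fun _ _ => pay_eq_zero_of_alloc_ne hIR hN (by simp [h])

section Moral

variable {α : ℝ} {r : ℝ≥0}

theorem Moral.pay_le_pay_update (hM : M.Moral α) (hv : M.alloc v = some i)
    (hw : M.alloc (update v i r) = some i) : M.pay v i ≤ M.pay (update v i r) i := by
  obtain ⟨hIR, hN, hmoral⟩ := hM
  have others_unaffected :
      ∑ j ∈ univ.erase i, (M.util v j (v j) - M.util (update v i r) j (v j)) = 0 :=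
    sum_eq_zero fun j hj => by
      have hij : i ≠ j := (ne_of_mem_erase hj).symm
      rw [util_eq_zero_of_alloc_ne hIR hN (by simp [hv, hij]),
        util_eq_zero_of_alloc_ne hIR hN (by simp [hw, hij]), sub_zero]
  have hgain : M.util (update v i r) i (v i) - M.util v i (v i) =
      M.pay v i - M.pay (update v i r) i := by
    simp only [util, hv, hw, if_true]
    ring
  by_contra! hlt
  have := hmoral v i r (by rw [hgain]; linarith)
  rw [others_unaffected, mul_zero, hgain] at this
  linarith

theorem Moral.pay_update_eq (hM : M.Moral α) (hv : M.alloc v = some i)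
    (hw : M.alloc (update v i r) = some i) : M.pay (update v i r) i = M.pay v i := by
  refine le_antisymm ?_ (hM.pay_le_pay_update hv hw)
  simpa using hM.pay_le_pay_update (r := v i) hw (by simpa using hv)

end Moral

def CanWin (M : Mechanism n) (i : Fin n) (v : Fin n → ℝ≥0) : Prop :=
  ∃ x, M.alloc (update v i x) = some i

theorem canWin_update (M : Mechanism n) (i : Fin n) (v : Fin n → ℝ≥0) (r : ℝ≥0) :
    M.CanWin i (update v i r) ↔ M.CanWin i v := by
  simp [CanWin]

/-- What `i` pays in `M` when he wins against the bids `v` of the others (`0` if he cannot win);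
for moral `M` it does not depend on the winning bid (`Moral.price_eq`). -/
noncomputable def price (M : Mechanism n) (i : Fin n) (v : Fin n → ℝ≥0) : ℝ≥0 :=
  open Classical in
  if h : M.CanWin i v then (M.pay (update v i h.choose) i).toNNReal else 0

theorem Moral.price_eq {α : ℝ} (hM : M.Moral α) {x : ℝ≥0}
    (hx : M.alloc (update v i x) = some i) :
    (M.price i v : ℝ) = M.pay (update v i x) i := by
  have h : M.CanWin i v := ⟨x, hx⟩
  rw [price, dif_pos h, Real.coe_toNNReal _ (hM.2.1 _ _)]
  simpa using (hM.pay_update_eq (r := x) h.choose_spec (by simpa using hx)).symm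

theorem Moral.price_update {α : ℝ} (hM : M.Moral α) (i : Fin n) (v : Fin n → ℝ≥0) (r : ℝ≥0) :
    M.price i (update v i r) = M.price i v := by
  by_cases h : M.CanWin i v
  · obtain ⟨x, hx⟩ := h
    apply NNReal.coe_injective
    rw [hM.price_eq (x := x) (by simpa using hx), hM.price_eq hx, update_idem]
  · rw [price, price, dif_neg h, dif_neg (by rwa [canWin_update])]

section Threshold

variable (q : Fin n → (Fin n → ℝ≥0) → ℝ≥0) (F : Fin n → (Fin n → ℝ≥0) → Prop)

def Accepts (i : Fin n) (v : Fin n → ℝ≥0) : Prop := F i v ∧ q i v ≤ v i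

noncomputable def thresholdAlloc (v : Fin n → ℝ≥0) : Option (Fin n) :=
  open Classical in
  if h : ∃ i, Accepts q F i v then some h.choose else none

noncomputable def threshold : Mechanism n where
  alloc := thresholdAlloc q F
  pay v i := if thresholdAlloc q F v = some i then (q i v : ℝ) else 0

variable {q F}

theorem accepts_of_thresholdAlloc_eq_some (h : thresholdAlloc q F v = some i) :
    Accepts q F i v := by
  unfold thresholdAlloc at h
  split_ifs at h with hex
  exact Option.some_injective _ h ▸ hex.choose_spec

theorem exists_thresholdAlloc_eq_some (h : Accepts q F i v) :
    ∃ m, thresholdAlloc q F v = some m := by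
  unfold thresholdAlloc
  exact ⟨_, dif_pos ⟨i, h⟩⟩

variable (q F)

theorem threshold_IR : (threshold q F).IR := by
  intro v i
  change (if thresholdAlloc q F v = some i then (q i v : ℝ) else 0) ≤
    if thresholdAlloc q F v = some i then (v i : ℝ) else 0
  split_ifs with h
  · exact_mod_cast (accepts_of_thresholdAlloc_eq_some h).2
  · exact le_rfl

theorem threshold_NPT : (threshold q F).NPT := by
  intro v i
  change (0 : ℝ) ≤ if thresholdAlloc q F v = some i then (q i v : ℝ) else 0
  split_ifs <;> simp

variable {q F}

theorem le_of_thresholdAlloc_ne (hq : ∀ v i, maxOther i v ≤ q i v) (hF : F i v)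
    (h : thresholdAlloc q F v ≠ some i) : v i ≤ q i v := by
  by_contra! hlt
  obtain ⟨m, hm⟩ := exists_thresholdAlloc_eq_some ⟨hF, hlt.le⟩
  have hmi : i ≠ m := by rintro rfl; exact h hm
  -- two distinct accepting players would each bid at least the other's bid
  have := calc v i ≤ maxOther m v := le_maxOther hmi v
    _ ≤ q m v := hq v m
    _ ≤ v m := (accepts_of_thresholdAlloc_eq_some hm).2
    _ ≤ maxOther i v := le_maxOther hmi.symm v
    _ ≤ q i v := hq v i
  exact this.not_gt hlt

theorem threshold_dominantStrategy (hq : ∀ v i, maxOther i v ≤ q i v)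
    (hq_update : ∀ i v r, q i (update v i r) = q i v)
    (hF_update : ∀ i v r, F i (update v i r) ↔ F i v) :
    (threshold q F).DominantStrategy := by
  intro v i r
  have hutil : ∀ b t, (threshold q F).util b i t =
      if thresholdAlloc q F b = some i then (t : ℝ) - q i b else 0 := by
    intro b t
    by_cases hb : thresholdAlloc q F b = some i <;> simp [util, threshold, hb]
  rw [hutil, hutil, hq_update i v r]
  split_ifs with hw hv hv
  · exact le_rfl
  · have hF : F i v := (hF_update i v r).1 (accepts_of_thresholdAlloc_eq_some hw).1
    have : (v i : ℝ) ≤ q i v := mod_cast le_of_thresholdAlloc_ne hq hF hv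
    linarith
  · exact sub_nonneg.2 (mod_cast (accepts_of_thresholdAlloc_eq_some hv).2)
  · exact le_rfl

theorem le_sum_pay_threshold (hq : ∀ v i, maxOther i v ≤ q i v) (h : Accepts q F i v) :
    (q i v : ℝ) ≤ ∑ j, (threshold q F).pay v j := by
  obtain ⟨m, hm⟩ := exists_thresholdAlloc_eq_some h
  rw [sum_pay_eq_of_alloc_eq_some (threshold_IR q F) (threshold_NPT q F) hm]
  simp only [threshold, hm, if_true, NNReal.coe_le_coe]
  rcases eq_or_ne i m with rfl | him
  · exact le_rfl
  · exact h.2.trans ((le_maxOther him v).trans (hq v m))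

end Threshold

noncomputable def vickrey : Mechanism n := threshold maxOther fun _ _ => True

noncomputable def vickreyWithReserve (M : Mechanism n) : Mechanism n :=
  threshold (fun i v => max (maxOther i v) (M.price i v)) M.CanWin

theorem vickrey_dominantStrategy : (vickrey (n := n)).DominantStrategy :=
  threshold_dominantStrategy (fun _ _ => le_rfl) maxOther_update fun _ _ _ => Iff.rfl

theorem Moral.vickreyWithReserve_dominantStrategy {α : ℝ} (hM : M.Moral α) :
    M.vickreyWithReserve.DominantStrategy :=
  threshold_dominantStrategy (fun _ _ => le_max_left _ _)
    (fun i v r => by rw [maxOther_update, hM.price_update]) (canWin_update M)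

theorem min_le_sum_pay_vickrey (v : Fin n → ℝ≥0) (j : Fin n) :
    ((min (v j) (maxOther j v) : ℝ≥0) : ℝ) ≤ ∑ i, vickrey.pay v i := by
  obtain ⟨k, -, hk⟩ := exists_max_image univ v ⟨j, mem_univ j⟩
  have hrev := le_sum_pay_threshold (F := fun _ _ => True) (fun _ _ => le_rfl)
    ⟨trivial, maxOther_le_of_isMax fun i => hk i (mem_univ i)⟩
  refine le_trans (NNReal.coe_le_coe.2 ?_) hrev
  rcases eq_or_ne j k with rfl | hjk
  · exact min_le_right _ _
  · exact (min_le_left _ _).trans (le_maxOther hjk v)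

theorem Moral.pay_le_sum_pay_vickreyWithReserve {α : ℝ} (hM : M.Moral α)
    (h : M.alloc v = some j) (hj : maxOther j v ≤ v j) :
    M.pay v j ≤ ∑ i, M.vickreyWithReserve.pay v i := by
  have hprice : (M.price j v : ℝ) = M.pay v j := by
    simpa using hM.price_eq (v := v) (i := j) (x := v j) (by simpa using h)
  have hprice_le : M.price j v ≤ v j := by
    rw [← NNReal.coe_le_coe, hprice]
    exact hM.1.pay_le_of_alloc_eq_some h
  have hacc : Accepts (fun i v => max (maxOther i v) (M.price i v)) M.CanWin j v :=
    ⟨⟨v j, by simpa using h⟩, max_le hj hprice_le⟩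
  calc M.pay v j = M.price j v := hprice.symm
    _ ≤ max (maxOther j v) (M.price j v) := NNReal.coe_le_coe.2 (le_max_right _ _)
    _ ≤ ∑ i, M.vickreyWithReserve.pay v i :=
      le_sum_pay_threshold (fun _ _ => le_max_left _ _) hacc

theorem Moral.sum_pay_le_add {α : ℝ} (hM : M.Moral α) (v : Fin n → ℝ≥0) :
    ∑ i, M.pay v i ≤ ∑ i, M.vickreyWithReserve.pay v i + ∑ i, vickrey.pay v i := by
  have hB := (threshold_NPT _ _).sum_pay_nonneg (M := M.vickreyWithReserve) v
  have hC := (threshold_NPT _ _).sum_pay_nonneg (M := vickrey) v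
  rcases h : M.alloc v with _ | j
  · rw [sum_pay_eq_zero_of_alloc_eq_none hM.1 hM.2.1 h]
    positivity
  rw [sum_pay_eq_of_alloc_eq_some hM.1 hM.2.1 h]
  rcases le_or_gt (maxOther j v) (v j) with hj | hj
  · linarith [hM.pay_le_sum_pay_vickreyWithReserve h hj]
  · have := min_le_sum_pay_vickrey v j
    rw [min_eq_left hj.le] at this
    linarith [hM.1.pay_le_of_alloc_eq_some h]

end Mechanism

theorem half_le_max_of_le_add {ι : Type*} {S : Finset ι} {w f g h : ι → ℝ}
    (hw : ∀ x ∈ S, 0 ≤ w x) (hfgh : ∀ x ∈ S, f x ≤ g x + h x) :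
    (∑ x ∈ S, w x * f x) / 2 ≤ max (∑ x ∈ S, w x * g x) (∑ x ∈ S, w x * h x) := by
  have : ∑ x ∈ S, w x * f x ≤ ∑ x ∈ S, w x * g x + ∑ x ∈ S, w x * h x := by
    rw [← sum_add_distrib]
    exact sum_le_sum fun x hx => by
      rw [← mul_add]
      exact mul_le_mul_of_nonneg_left (hfgh x hx) (hw x hx)
  linarith [le_max_left (∑ x ∈ S, w x * g x) (∑ x ∈ S, w x * h x),
    le_max_right (∑ x ∈ S, w x * g x) (∑ x ∈ S, w x * h x)]

theorem stmt12_general {n : ℕ} (S : Finset (Fin n → ℝ≥0)) (H : (Fin n → ℝ≥0) → ℝ)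
    (hH0 : ∀ v, 0 ≤ H v)
    (α : ℝ)
    (M : Mechanism n) (hM : M.Moral α) :
    ∃ M' : Mechanism n, M'.IR ∧ M'.NPT ∧ M'.DominantStrategy ∧
      (∑ v ∈ S, H v * ∑ i, M.pay v i) / 2 ≤ ∑ v ∈ S, H v * ∑ i, M'.pay v i := by
  rcases le_max_iff.1 <| half_le_max_of_le_add (S := S) (fun v _ => hH0 v)
      (fun v _ => hM.sum_pay_le_add v) with h | h
  · exact ⟨_, Mechanism.threshold_IR _ _, Mechanism.threshold_NPT _ _,
      hM.vickreyWithReserve_dominantStrategy, h⟩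
  · exact ⟨_, Mechanism.threshold_IR _ _, Mechanism.threshold_NPT _ _,
      Mechanism.vickrey_dominantStrategy, h⟩

theorem stmt12 {n : ℕ} (S : Finset (Fin n → ℝ≥0)) (H : (Fin n → ℝ≥0) → ℝ)
    (hH0 : ∀ v, 0 ≤ H v) (hHsupp : ∀ v, v ∉ S → H v = 0) (hH1 : ∑ v ∈ S, H v = 1)
    (α : ℝ) (hα0 : 0 ≤ α) (hα1 : α ≤ 1)
    (M : Mechanism n) (hM : M.Moral α) :
    ∃ M' : Mechanism n, M'.IR ∧ M'.NPT ∧ M'.DominantStrategy ∧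
      (∑ v ∈ S, H v * ∑ i, M.pay v i) / 2 ≤ ∑ v ∈ S, H v * ∑ i, M'.pay v i :=
  stmt12_general S H hH0 α M hM
end

section
/- Let F be a standard discrete distribution on V = {0, ε, …, 1} with monopolist price x, values drawn i.i.d. from F, and let M be a revenue-maximizing moral mechanism (profit maximizer) with potential payment functions p_{-1},…,p_{-n}. Let v_{-i} ∈ V^{n−1} satisfy: max(v_{-i}) ≥ x; for every player j and every v̂_{-j} ≻ v_{-i}, p_{-j}(v̂_{-j}) ≥ max(v̂_{-j}); and p_{-i}(v_{-i}) < max(v_{-i}). Set v_i = p_{-i}(v_{-i}) and suppose that in the instance (v_i, v_{-i}) there exists some player j ≠ i with v_j ≥ p_{-j}(v_{-j}). Then the mechanism M' whose potential payment functions are identical to those of M except that p'_{-i}(v_{-i}) = p_{-i}(v_{-i}) + ε has expected revenue at least as large as M. -/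
open scoped NNReal ENNReal
open Finset

/-- A moral mechanism, in its equivalent description as a profit maximizer: an individually
rational, payment independent single-item mechanism with no positive transfers, described by
its potential payment functions `pp i` (the payment of player `i` if he wins, given the
others' values; `⊤` if he can never win) together with an allocation rule that gives the item
to a player with maximal nonnegative potential profit `vᵢ − pp i v`, and allocates whenever
some player has strictly positive potential profit. -/
structure PM (n : ℕ) where
  pp : Fin n → (Fin n → ℝ≥0) → ℝ≥0∞
  alloc : (Fin n → ℝ≥0) → Option (Fin n)
  indep : ∀ (i : Fin n) (v : Fin n → ℝ≥0) (r : ℝ≥0),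
    pp i (Function.update v i r) = pp i v
  ir : ∀ (v : Fin n → ℝ≥0) (i : Fin n), alloc v = some i → pp i v ≤ (v i : ℝ≥0∞)
  maxProfit : ∀ (v : Fin n → ℝ≥0) (i : Fin n), alloc v = some i →
    ∀ j : Fin n, (v j : ℝ≥0∞) + pp i v ≤ (v i : ℝ≥0∞) + pp j v
  sells : ∀ v : Fin n → ℝ≥0, (∃ i, pp i v < (v i : ℝ≥0∞)) → alloc v ≠ none

namespace PM

variable {n : ℕ}

/-- The revenue of a profit maximizer in a given instance: the winner pays his potential
payment, and the revenue is `0` if the item is unallocated. -/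
noncomputable def rev (M : PM n) (v : Fin n → ℝ≥0) : ℝ :=
  match M.alloc v with
  | some i => (M.pp i v).toReal
  | none => 0

/-- Expected revenue when the `n` values are drawn i.i.d. from the discrete distribution
with pdf `g` on the grid `{0, ε, 2ε, …, mε}`. -/
noncomputable def expRev (m : ℕ) (ε : ℝ≥0) (g : ℕ → ℝ) (M : PM n) : ℝ :=
  ∑ k : Fin n → Fin (m + 1),
    (∏ i, g ((k i : ℕ))) * M.rev (fun i => ((k i : ℕ) : ℝ≥0) * ε)

/-- `M` maximizes expected revenue among all moral mechanisms (profit maximizers). -/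
def RevMax (m : ℕ) (ε : ℝ≥0) (g : ℕ → ℝ) (M : PM n) : Prop :=
  ∀ M' : PM n, expRev m ε g M' ≤ expRev m ε g M

/-- All coordinates of `v` belong to the grid `{0, ε, 2ε, …, mε}`. -/
def OnGrid (m : ℕ) (ε : ℝ≥0) (v : Fin n → ℝ≥0) : Prop :=
  ∀ i, ∃ k ≤ m, v i = (k : ℝ≥0) * ε

/-- `max(v₋ᵢ)` : the largest entry of `v` outside coordinate `i`. -/
noncomputable def maxOther (i : Fin n) (v : Fin n → ℝ≥0) : ℝ≥0 :=
  (Finset.univ.erase i).sup v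

/-- The entries of `v` outside coordinate `i`, sorted in decreasing order. -/
noncomputable def sortedDel (i : Fin n) (v : Fin n → ℝ≥0) : List ℝ≥0 :=
  List.insertionSort (· ≥ ·) ((List.ofFn v).eraseIdx (i : ℕ))

/-- `w₋ⱼ ≻ v₋ᵢ` : the decreasingly sorted entries of `w` outside `j` are lexicographically
greater than the decreasingly sorted entries of `v` outside `i`. -/
def SuccOrd (j : Fin n) (w : Fin n → ℝ≥0) (i : Fin n) (v : Fin n → ℝ≥0) : Prop :=
  List.Lex (· < ·) (sortedDel i v) (sortedDel j w)

/-- `x` is (the index of) the monopolist price of the distribution with pdf `g` on the grid: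
`x·ε` maximizes `p·(1 − F(p − ε))` over grid prices `p`. -/
def MonopolistIdx (m : ℕ) (ε : ℝ≥0) (g : ℕ → ℝ) (x : ℕ) : Prop :=
  x ≤ m ∧ ∀ k ≤ m,
    (k : ℝ) * (ε : ℝ) * (1 - ∑ j ∈ Finset.range k, g j) ≤
      (x : ℝ) * (ε : ℝ) * (1 - ∑ j ∈ Finset.range x, g j)

/-- The distribution with pdf `g` on the grid `{0, ε, …, mε}` is standard. -/
def StandardD (m : ℕ) (ε : ℝ≥0) (g : ℕ → ℝ) : Prop :=
  ∀ k k' : ℕ, k ≤ m → k' < k →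
    (k' : ℝ) * (ε : ℝ) - (ε : ℝ) * (1 - ∑ j ∈ Finset.range (k + 1), g j) / g k' ≤
      (k : ℝ) * (ε : ℝ) - (ε : ℝ) * (1 - ∑ j ∈ Finset.range (k + 1), g j) / g k

end PM

/-!
Raising `p₋ᵢ(v₋ᵢ)` only changes the prices at the instances `(r, v₋ᵢ)`. Realise the new prices
by the profit maximizer that breaks ties towards the highest payment. On every instance it earns
at least as much as `M`: a winner of `M` whose price is unchanged keeps a maximal profit, and when
`i` wins `(r, v₋ᵢ)` under `M`, every rival `b` who can still afford his price pays at least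
`p₋ᵢ(v₋ᵢ)`, since otherwise `r > v_b` and the instance `(r, v₋ᵢ)` seen from `b` is `≻ v₋ᵢ`,
hence priced at least at its maximum `r`. The only possible loss is an instance `(r, v₋ᵢ)` won by
`i` with `p₋ᵢ(v₋ᵢ) ≤ r < p₋ᵢ(v₋ᵢ) + ε` where nobody can afford the new prices. For
`r = p₋ᵢ(v₋ᵢ)` player `j` can; for `r > p₋ᵢ(v₋ᵢ)`, raising the price to `r` instead would lose
nothing on the grid and gain at `(r, v₋ᵢ)`, contradicting the optimality of `M`.
-/

namespace List

theorem ofFn_update {α : Type*} {n : ℕ} (f : Fin n → α) (i : Fin n) (a : α) :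
    ofFn (Function.update f i a) = (ofFn f).set i a := by
  refine ext_getElem (by simp) fun k h₁ h₂ => ?_
  simp only [List.getElem_ofFn, getElem_set, Function.update_apply]
  grind

variable {α : Type*} [LinearOrder α]

theorem Perm.insertionSort_ge_eq {l₁ l₂ : List α} (h : l₁ ~ l₂) :
    l₁.insertionSort (· ≥ ·) = l₂.insertionSort (· ≥ ·) :=
  (((perm_insertionSort _ _).trans h).trans (perm_insertionSort _ _).symm).eq_of_sortedGE
    sortedGE_insertionSort sortedGE_insertionSort

theorem lex_orderedInsert_ge_of_lt {a b : α} (hab : a < b) {l : List α}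
    (hl : l.Pairwise (· ≥ ·)) :
    Lex (· < ·) (l.orderedInsert (· ≥ ·) a) (l.orderedInsert (· ≥ ·) b) := by
  induction l generalizing a b with
  | nil => exact .rel hab
  | cons x l ih =>
    obtain ⟨hxl, hl⟩ := pairwise_cons.1 hl
    rcases lt_or_ge b x with hbx | hxb
    · rw [orderedInsert_of_not_le (· ≥ ·) _ (not_le.2 (hab.trans hbx)),
        orderedInsert_of_not_le (· ≥ ·) _ (not_le.2 hbx)]
      exact .cons (ih hab hl)
    rw [orderedInsert_cons_of_le (· ≥ ·) _ hxb]
    rcases le_or_gt x a with hxa | hax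
    · rw [orderedInsert_cons_of_le (· ≥ ·) _ hxa]
      exact .rel hab
    rw [orderedInsert_of_not_le (· ≥ ·) _ (not_le.2 hax)]
    rcases hxb.lt_or_eq with hxb | rfl
    · exact .rel hxb
    have hx : l.orderedInsert (· ≥ ·) x = x :: l := by
      cases l with
      | nil => rfl
      | cons y l => exact orderedInsert_cons_of_le (· ≥ ·) _ (hxl y mem_cons_self)
    exact .cons (hx ▸ ih hax hl)

theorem lex_insertionSort_cons_of_lt {a b : α} (hab : a < b) (l : List α) :
    Lex (· < ·) ((a :: l).insertionSort (· ≥ ·)) ((b :: l).insertionSort (· ≥ ·)) :=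
  lex_orderedInsert_ge_of_lt hab (pairwise_insertionSort _ l)

end List

theorem ENNReal.tsub_le_tsub_iff_add_le_add {a b c d : ℝ≥0∞} (hd : d ≤ b) (hb : b ≠ ⊤) :
    a - c ≤ b - d ↔ a + d ≤ b + c := by
  rw [tsub_le_iff_right, ← ENNReal.add_le_add_iff_right (ne_top_of_le_ne_top hb hd),
    add_right_comm, tsub_add_cancel_of_le hd]

namespace PM

variable {n m : ℕ} {ε : ℝ≥0}

theorem OnGrid.add_le_of_lt {w w' : Fin n → ℝ≥0} (hw : OnGrid m ε w) (hw' : OnGrid m ε w')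
    {l l' : Fin n} (h : w l < w' l') : w l + ε ≤ w' l' := by
  obtain ⟨a, -, ha⟩ := hw l
  obtain ⟨b, -, hb⟩ := hw' l'
  rw [ha, hb] at h ⊢
  have hab : (a : ℝ≥0) + 1 ≤ b := by
    exact_mod_cast Nat.succ_le_of_lt (by exact_mod_cast lt_of_mul_lt_mul_right h zero_le)
  calc (a : ℝ≥0) * ε + ε = (a + 1) * ε := by ring
    _ ≤ b * ε := mul_le_mul_of_nonneg_right hab zero_le

theorem onGrid_gridPoint (k : Fin n → Fin (m + 1)) :
    OnGrid m ε (fun l => ((k l : ℕ) : ℝ≥0) * ε) :=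
  fun l => ⟨k l, Nat.lt_succ_iff.1 (k l).2, rfl⟩

theorem rev_of_alloc_eq_some {M : PM n} {w : Fin n → ℝ≥0} {b : Fin n}
    (h : M.alloc w = some b) : M.rev w = (M.pp b w).toReal := by
  simp [rev, h]

theorem rev_nonneg (M : PM n) (w : Fin n → ℝ≥0) : 0 ≤ M.rev w := by
  unfold rev
  split <;> simp

theorem expRev_le_expRev {g : ℕ → ℝ} (hg : ∀ k ≤ m, 0 ≤ g k) {M N : PM n}
    (h : ∀ w, OnGrid m ε w → M.rev w ≤ N.rev w) : expRev m ε g M ≤ expRev m ε g N :=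
  sum_le_sum fun k _ => mul_le_mul_of_nonneg_left (h _ (onGrid_gridPoint k))
    (prod_nonneg fun l _ => hg _ (Nat.lt_succ_iff.1 (k l).2))

theorem expRev_lt_expRev {g : ℕ → ℝ} (hg : ∀ k ≤ m, 0 < g k) {M N : PM n}
    (h : ∀ w, OnGrid m ε w → M.rev w ≤ N.rev w) {w : Fin n → ℝ≥0} (hw : OnGrid m ε w)
    (hlt : M.rev w < N.rev w) : expRev m ε g M < expRev m ε g N := by
  choose c hcm hc using hw
  let k₀ : Fin n → Fin (m + 1) := fun l => ⟨c l, Nat.lt_succ_of_le (hcm l)⟩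
  have hk₀ : (fun l => ((k₀ l : ℕ) : ℝ≥0) * ε) = w := funext fun l => (hc l).symm
  refine sum_lt_sum (fun k _ => ?_) ⟨k₀, mem_univ _, ?_⟩
  · exact mul_le_mul_of_nonneg_left (h _ (onGrid_gridPoint k))
      (prod_nonneg fun l _ => (hg _ (Nat.lt_succ_iff.1 (k l).2)).le)
  · rw [hk₀]
    exact mul_lt_mul_of_pos_left hlt (prod_pos fun l _ => hg _ (hcm l))

theorem pp_eq_of_agree (M : PM n) {i : Fin n} {v w : Fin n → ℝ≥0}
    (h : ∀ l, l ≠ i → w l = v l) : M.pp i w = M.pp i v := by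
  rw [Function.eq_update_iff.2 ⟨rfl, h⟩, M.indep]

section OfPayments

variable {q : Fin n → (Fin n → ℝ≥0) → ℝ≥0∞} {w : Fin n → ℝ≥0} {l : Fin n}

open scoped Classical in
noncomputable def candidates (q : Fin n → (Fin n → ℝ≥0) → ℝ≥0∞) (w : Fin n → ℝ≥0) :
    Finset (Fin n) :=
  {l | q l w ≤ w l ∧ ∀ j, (w j : ℝ≥0∞) - q j w ≤ w l - q l w}

theorem mem_candidates :
    l ∈ candidates q w ↔ q l w ≤ w l ∧ ∀ j, (w j : ℝ≥0∞) - q j w ≤ w l - q l w := by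
  simp [candidates]

theorem candidates_nonempty (h : ∃ l, q l w ≤ w l) : (candidates q w).Nonempty := by
  classical
  obtain ⟨b, hb, hmax⟩ := exists_max_image {l | q l w ≤ w l}
    (fun l => (w l : ℝ≥0∞) - q l w) (by simpa [Finset.Nonempty] using h)
  refine ⟨b, mem_candidates.2 ⟨(mem_filter.1 hb).2, fun j => ?_⟩⟩
  by_cases hj : q j w ≤ w j
  · exact hmax j (by simpa using hj)
  · rw [tsub_eq_zero_of_le (not_le.1 hj).le]
    exact bot_le

noncomputable def greedyAlloc (q : Fin n → (Fin n → ℝ≥0) → ℝ≥0∞) (w : Fin n → ℝ≥0) :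
    Option (Fin n) :=
  if h : (candidates q w).Nonempty then
    some ((candidates q w).exists_max_image (q · w) h).choose
  else none

theorem mem_candidates_of_greedyAlloc_eq_some {b : Fin n} (h : greedyAlloc q w = some b) :
    b ∈ candidates q w := by
  unfold greedyAlloc at h
  split at h
  · next hne =>
    cases h
    exact ((candidates q w).exists_max_image (q · w) hne).choose_spec.1
  · cases h

theorem exists_greedyAlloc_eq_some (h : (candidates q w).Nonempty) :
    ∃ b ∈ candidates q w, greedyAlloc q w = some b ∧ ∀ l ∈ candidates q w, q l w ≤ q b w :=
  let hb := ((candidates q w).exists_max_image (q · w) h).choose_spec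
  ⟨_, hb.1, dif_pos h, hb.2⟩

noncomputable def ofPayments (q : Fin n → (Fin n → ℝ≥0) → ℝ≥0∞)
    (hq : ∀ i v r, q i (Function.update v i r) = q i v) : PM n where
  pp := q
  alloc := greedyAlloc q
  indep := hq
  ir _ _ h := (mem_candidates.1 (mem_candidates_of_greedyAlloc_eq_some h)).1
  maxProfit _ _ h j := by
    obtain ⟨hb, hmax⟩ := mem_candidates.1 (mem_candidates_of_greedyAlloc_eq_some h)
    exact (ENNReal.tsub_le_tsub_iff_add_le_add hb ENNReal.coe_ne_top).1 (hmax j)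
  sells _ h := by
    obtain ⟨l, hl⟩ := h
    obtain ⟨b, -, hb, -⟩ := exists_greedyAlloc_eq_some (candidates_nonempty ⟨l, hl.le⟩)
    simp [hb]

variable {hq : ∀ i v r, q i (Function.update v i r) = q i v}

theorem exists_rev_ofPayments_eq (h : ∃ l, q l w ≤ w l) :
    ∃ b ∈ candidates q w, (ofPayments q hq).rev w = (q b w).toReal := by
  obtain ⟨b, hb, hbw, -⟩ := exists_greedyAlloc_eq_some (candidates_nonempty h)
  exact ⟨b, hb, rev_of_alloc_eq_some (M := ofPayments q hq) hbw⟩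

theorem le_rev_ofPayments (hl : l ∈ candidates q w) :
    (q l w).toReal ≤ (ofPayments q hq).rev w := by
  obtain ⟨b, hb, hbw, hmax⟩ := exists_greedyAlloc_eq_some ⟨l, hl⟩
  rw [rev_of_alloc_eq_some (M := ofPayments q hq) hbw]
  exact ENNReal.toReal_mono (ne_top_of_le_ne_top ENNReal.coe_ne_top (mem_candidates.1 hb).1)
    (hmax l hl)

theorem mem_candidates_of_alloc_eq_some {M : PM n} (hq : ∀ j, M.pp j w ≤ q j w)
    (hl : M.alloc w = some l) (hql : q l w = M.pp l w) : l ∈ candidates q w := by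
  have hlw := M.ir w l hl
  refine mem_candidates.2 ⟨hql ▸ hlw, fun j => ?_⟩
  rw [hql]
  exact (tsub_le_tsub_left (hq j) _).trans
    ((ENNReal.tsub_le_tsub_iff_add_le_add hlw ENNReal.coe_ne_top).2 (M.maxProfit w l hl j))

end OfPayments

section Raise

variable {M : PM n} {i l : Fin n} {v w : Fin n → ℝ≥0} {t : ℝ≥0∞}

open scoped Classical in
noncomputable def raisedPP (M : PM n) (i : Fin n) (v : Fin n → ℝ≥0) (t : ℝ≥0∞) :
    Fin n → (Fin n → ℝ≥0) → ℝ≥0∞ :=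
  fun l w => if l = i ∧ ∀ l', l' ≠ i → w l' = v l' then t else M.pp l w

theorem raisedPP_eq_pp (h : ¬(l = i ∧ ∀ l', l' ≠ i → w l' = v l')) :
    raisedPP M i v t l w = M.pp l w :=
  if_neg h

theorem raisedPP_of_ne (hl : l ≠ i) : raisedPP M i v t l w = M.pp l w :=
  raisedPP_eq_pp fun h => hl h.1

theorem raisedPP_self_of_agree (h : ∀ l', l' ≠ i → w l' = v l') : raisedPP M i v t i w = t :=
  if_pos ⟨rfl, h⟩

theorem raisedPP_self_of_not_agree (h : ¬∀ l', l' ≠ i → w l' = v l') :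
    raisedPP M i v t i w = M.pp i w :=
  raisedPP_eq_pp fun h' => h h'.2

theorem pp_le_raisedPP (ht : M.pp i v ≤ t) : M.pp l w ≤ raisedPP M i v t l w := by
  unfold raisedPP
  split_ifs with h
  · obtain ⟨rfl, hwv⟩ := h
    rwa [pp_eq_of_agree M hwv]
  · exact le_rfl

theorem raisedPP_update (M : PM n) (i : Fin n) (v : Fin n → ℝ≥0) (t : ℝ≥0∞) (l : Fin n)
    (w : Fin n → ℝ≥0) (r : ℝ≥0) :
    raisedPP M i v t l (Function.update w l r) = raisedPP M i v t l w := by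
  unfold raisedPP
  rw [M.indep]
  congr 1
  refine propext (and_congr_right fun hl => forall₂_congr fun l' hl' => ?_)
  rw [Function.update_of_ne (hl ▸ hl')]

noncomputable def raise (M : PM n) (i : Fin n) (v : Fin n → ℝ≥0) (t : ℝ≥0∞) : PM n :=
  ofPayments (raisedPP M i v t) (raisedPP_update M i v t)

end Raise

theorem succOrd_of_lt {b i : Fin n} (hbi : b ≠ i) {w v : Fin n → ℝ≥0}
    (hwv : ∀ l, l ≠ i → w l = v l) (hlt : v b < w i) : SuccOrd b w i v := by
  classical
  set C := (List.ofFn v).eraseIdx i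
  have hwi : (List.ofFn w).Perm (w i :: C) := by
    have h := List.ofFn_update v i (w i)
    rw [← Function.eq_update_iff.2 ⟨rfl, hwv⟩] at h
    exact h ▸ List.set_perm_cons_eraseIdx (by simp) _
  have hwb : (List.ofFn w).Perm (v b :: (List.ofFn w).eraseIdx b) := by
    simpa [hwv b hbi] using (List.getElem_cons_eraseIdx_perm (l := List.ofFn w) (n := b)
      (by simp)).symm
  have hmem : v b ∈ C :=
    (List.mem_cons.1 ((hwi.symm.trans hwb).mem_iff.2 List.mem_cons_self)).resolve_left hlt.ne
  have hC : C.Perm (v b :: C.erase (v b)) := List.perm_cons_erase hmem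
  have hD : ((List.ofFn w).eraseIdx b).Perm (w i :: C.erase (v b)) :=
    (hwb.symm.trans (hwi.trans ((hC.cons _).trans (List.Perm.swap _ _ _)))).cons_inv
  unfold SuccOrd sortedDel
  rw [hC.insertionSort_ge_eq, hD.insertionSort_ge_eq]
  exact List.lex_insertionSort_cons_of_lt hlt _

def MaxPricedAbove (M : PM n) (m : ℕ) (ε : ℝ≥0) (i : Fin n) (v : Fin n → ℝ≥0) : Prop :=
  ∀ (j : Fin n) (w : Fin n → ℝ≥0), OnGrid m ε w → SuccOrd j w i v →
    (maxOther j w : ℝ≥0∞) ≤ M.pp j w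

section Comparison

variable {M : PM n} {i : Fin n} {v w : Fin n → ℝ≥0}

theorem pp_le_pp_of_alloc_eq_some (hprev : MaxPricedAbove M m ε i v) (hw : OnGrid m ε w)
    (hwv : ∀ l, l ≠ i → w l = v l) (hi : M.alloc w = some i) {b : Fin n} (hbi : b ≠ i)
    (hb : M.pp b w ≤ w b) : M.pp i w ≤ M.pp b w := by
  have hib : w i ≤ v b := by
    by_contra! hlt
    have hmax : w i ≤ maxOther b w := le_sup (mem_erase.2 ⟨hbi.symm, mem_univ i⟩)
    have := (ENNReal.coe_le_coe.2 hmax).trans ((hprev b w hw (succOrd_of_lt hbi hwv hlt)).trans hb)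
    rw [hwv b hbi, ENNReal.coe_le_coe] at this
    exact this.not_gt hlt
  have hprofit := M.maxProfit w i hi b
  rw [hwv b hbi] at hprofit
  exact (ENNReal.add_le_add_iff_left ENNReal.coe_ne_top).1
    ((add_le_add_left (ENNReal.coe_le_coe.2 hib) _).trans hprofit)

theorem rev_le_rev_raise {t : ℝ≥0∞} (hprev : MaxPricedAbove M m ε i v) (ht : M.pp i v ≤ t)
    (hw : OnGrid m ε w)
    (hsold : (∀ l, l ≠ i → w l = v l) → M.alloc w = some i → ∃ l, raisedPP M i v t l w ≤ w l) :
    M.rev w ≤ (raise M i v t).rev w := by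
  cases hM : M.alloc w with
  | none => simpa [rev, hM] using rev_nonneg _ _
  | some l =>
    rw [rev_of_alloc_eq_some hM]
    by_cases hspecial : l = i ∧ ∀ l', l' ≠ i → w l' = v l'
    · obtain ⟨rfl, hwv⟩ := hspecial
      obtain ⟨b, hb, hrev⟩ := exists_rev_ofPayments_eq (hq := raisedPP_update M l v t)
        (hsold hwv hM)
      have hbw := (mem_candidates.1 hb).1
      rw [raise, hrev]
      refine ENNReal.toReal_mono (ne_top_of_le_ne_top ENNReal.coe_ne_top hbw) ?_
      rcases eq_or_ne b l with rfl | hbl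
      · rwa [raisedPP_self_of_agree hwv, pp_eq_of_agree M hwv]
      · rw [raisedPP_of_ne hbl] at hbw ⊢
        exact pp_le_pp_of_alloc_eq_some hprev hw hwv hM hbl hbw
    · rw [← raisedPP_eq_pp (t := t) hspecial]
      exact le_rev_ofPayments
        (mem_candidates_of_alloc_eq_some (fun _ => pp_le_raisedPP ht) hM (raisedPP_eq_pp hspecial))

theorem RevMax.exists_ne_pp_lt {g : ℕ → ℝ} (hM : RevMax m ε g M) (hg : ∀ k ≤ m, 0 < g k)
    (hprev : MaxPricedAbove M m ε i v) (hw : OnGrid m ε w) (hwv : ∀ l, l ≠ i → w l = v l)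
    (hi : M.alloc w = some i) (hlo : M.pp i v < w i) (hhi : (w i : ℝ≥0∞) < M.pp i v + ε) :
    ∃ l, l ≠ i ∧ M.pp l w < w l := by
  by_contra! hout
  have hle (w') (hw' : OnGrid m ε w') : M.rev w' ≤ (raise M i v (w i)).rev w' := by
    refine rev_le_rev_raise hprev hlo.le hw' fun hw'v hi' => ⟨i, ?_⟩
    rw [raisedPP_self_of_agree hw'v, ENNReal.coe_le_coe]
    by_contra! hlt
    have hlo' : M.pp i v ≤ w' i := pp_eq_of_agree M hw'v ▸ M.ir w' i hi'
    -- no grid value lies in `[p₋ᵢ(v₋ᵢ), w i)`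
    have := hhi.trans_le ((add_le_add_left hlo' _).trans
      (ENNReal.coe_le_coe.2 (hw'.add_le_of_lt hw hlt)))
    exact this.false
  have hcand : i ∈ candidates (raisedPP M i v (w i)) w := by
    refine mem_candidates.2 ⟨(raisedPP_self_of_agree hwv).le, fun l => ?_⟩
    rw [raisedPP_self_of_agree hwv, tsub_self]
    rcases eq_or_ne l i with rfl | hl
    · rw [raisedPP_self_of_agree hwv, tsub_self]
    · rw [raisedPP_of_ne hl, tsub_eq_zero_of_le (hout l hl)]
  have hgain : M.rev w < (raise M i v (w i)).rev w := by
    rw [rev_of_alloc_eq_some hi, pp_eq_of_agree M hwv]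
    calc (M.pp i v).toReal < (w i : ℝ≥0∞).toReal :=
          ENNReal.toReal_strict_mono ENNReal.coe_ne_top hlo
      _ = (raisedPP M i v (w i) i w).toReal := by rw [raisedPP_self_of_agree hwv]
      _ ≤ _ := le_rev_ofPayments hcand
  exact (hM _).not_gt (expRev_lt_expRev hg hle hw hgain)

end Comparison

end PM

theorem stmt14_general (n m : ℕ) (ε : ℝ≥0)
    (g : ℕ → ℝ) (hgpos : ∀ k ≤ m, 0 < g k)
    (M : PM n) (hMmax : PM.RevMax m ε g M)
    (i : Fin n) (v : Fin n → ℝ≥0)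
    (hprev : ∀ (j : Fin n) (w : Fin n → ℝ≥0), PM.OnGrid m ε w →
      PM.SuccOrd j w i v → (PM.maxOther j w : ℝ≥0∞) ≤ M.pp j w)
    (vi : ℝ≥0) (hvi : M.pp i v = (vi : ℝ≥0∞))
    (j : Fin n) (hji : j ≠ i)
    (hjprof : M.pp j (Function.update v i vi) ≤ (v j : ℝ≥0∞)) :
    ∃ M' : PM n,
      (∀ (l : Fin n) (w : Fin n → ℝ≥0), l ≠ i → M'.pp l w = M.pp l w) ∧
      (∀ w : Fin n → ℝ≥0,
        ((∀ l, l ≠ i → w l = v l) → M'.pp i w = M.pp i v + (ε : ℝ≥0∞)) ∧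
        ((¬ ∀ l, l ≠ i → w l = v l) → M'.pp i w = M.pp i w)) ∧
      PM.expRev m ε g M ≤ PM.expRev m ε g M' := by
  refine ⟨PM.raise M i v (M.pp i v + ε), fun l w hl => PM.raisedPP_of_ne hl,
    fun w => ⟨PM.raisedPP_self_of_agree, PM.raisedPP_self_of_not_agree⟩, ?_⟩
  refine PM.expRev_le_expRev (fun k hk => (hgpos k hk).le) fun w hw =>
    PM.rev_le_rev_raise hprev le_self_add hw fun hwv hi => ?_
  by_cases hhi : M.pp i v + ε ≤ w i
  · exact ⟨i, by rwa [PM.raisedPP_self_of_agree hwv]⟩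
  rcases (PM.pp_eq_of_agree M hwv ▸ M.ir w i hi).eq_or_lt with heq | hlo
  · have hw : w = Function.update v i vi :=
      Function.eq_update_iff.2 ⟨ENNReal.coe_inj.1 (hvi ▸ heq).symm, hwv⟩
    refine ⟨j, ?_⟩
    rw [PM.raisedPP_of_ne hji, hwv j hji, hw]
    exact hjprof
  · obtain ⟨l, hl, hlw⟩ := hMmax.exists_ne_pp_lt hgpos hprev hw hwv hi hlo (not_le.1 hhi)
    exact ⟨l, by rw [PM.raisedPP_of_ne hl]; exact hlw.le⟩

theorem stmt14 (n m : ℕ) (hm : 0 < m) (ε : ℝ≥0) (hε : (ε : ℝ) = 1 / m)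
    (g : ℕ → ℝ) (hgpos : ∀ k ≤ m, 0 < g k)
    (hgsum : ∑ k ∈ Finset.range (m + 1), g k = 1)
    (hstd : PM.StandardD m ε g)
    (x : ℕ) (hx : PM.MonopolistIdx m ε g x)
    (M : PM n) (hMmax : PM.RevMax m ε g M)
    (i : Fin n) (v : Fin n → ℝ≥0) (hv : PM.OnGrid m ε v)
    (hvx : (x : ℝ≥0) * ε ≤ PM.maxOther i v)
    (hprev : ∀ (j : Fin n) (w : Fin n → ℝ≥0), PM.OnGrid m ε w →
      PM.SuccOrd j w i v → (PM.maxOther j w : ℝ≥0∞) ≤ M.pp j w)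
    (hlt : M.pp i v < (PM.maxOther i v : ℝ≥0∞))
    (vi : ℝ≥0) (hvi : M.pp i v = (vi : ℝ≥0∞))
    (j : Fin n) (hji : j ≠ i)
    (hjprof : M.pp j (Function.update v i vi) ≤ (v j : ℝ≥0∞)) :
    ∃ M' : PM n,
      (∀ (l : Fin n) (w : Fin n → ℝ≥0), l ≠ i → M'.pp l w = M.pp l w) ∧
      (∀ w : Fin n → ℝ≥0,
        ((∀ l, l ≠ i → w l = v l) → M'.pp i w = M.pp i v + (ε : ℝ≥0∞)) ∧
        ((¬ ∀ l, l ≠ i → w l = v l) → M'.pp i w = M.pp i w)) ∧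
      PM.expRev m ε g M ≤ PM.expRev m ε g M' :=
  stmt14_general n m ε g hgpos M hMmax i v hprev vi hvi j hji hjprof
end
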